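/- arXiv:1701.09152 — 2 statements merged into one kernel-verified Lean document; each statement's English description precedes it below -/
import Mathlib

section
/- Let n ≥ 2 and let u₁, …, u_{n+1} be positive integers with u₁ + ⋯ + u_n = u_{n+1} − u_n and u₁ + ⋯ + u_i < u_{i+1}/2 for every 1 ≤ i ≤ n − 1. Set U = {0, u₁} + ⋯ + {0, u_{n+1}}, A = { Σ_{i∈I} u_i : I ⊆ {1, …, n−1} }, and B = A ∪ (A + u_{n+1}) ∪ {u₁ + ⋯ + u_n}. Then: B is an atom of P_fin,0(ℕ) with |B| ≥ 3; U = {0, u_n} + B; every factorization of U into atoms of P_fin,0(ℕ) is, up to reordering, either {0, u_n}, B or {0, u₁}, …, {0, u_{n+1}}; and consequently the set of lengths of U in P_fin,0(ℕ) is exactly {2, n+1}. -/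
open Pointwise

def IsAtom0 (A : Finset ℕ) : Prop :=
  0 ∈ A ∧ A ≠ {0} ∧
    ∀ X Y : Finset ℕ, 0 ∈ X → 0 ∈ Y → A = X + Y → X = {0} ∨ Y = {0}

def Aset (n : ℕ) (u : ℕ → ℕ) : Finset ℕ :=
  (Finset.Icc 1 (n - 1)).powerset.image fun I => ∑ i ∈ I, u i

def Bset (n : ℕ) (u : ℕ → ℕ) : Finset ℕ :=
  Aset n u ∪ (Aset n u).image (· + u (n + 1)) ∪ {∑ i ∈ Finset.Icc 1 n, u i}

def Uset (n : ℕ) (u : ℕ → ℕ) : Finset ℕ :=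
  ∑ i ∈ Finset.Icc 1 (n + 1), ({0, u i} : Finset ℕ)

namespace Aux

open Finset

def σ (u : ℕ → ℕ) (I : Finset ℕ) : ℕ := ∑ i ∈ I, u i

def cube (u : ℕ → ℕ) (J : Finset ℕ) : Finset ℕ := ∑ i ∈ J, ({0, u i} : Finset ℕ)

structure H (n : ℕ) (u : ℕ → ℕ) : Prop where
  hn : 2 ≤ n
  hpos : ∀ i, 1 ≤ i → i ≤ n + 1 → 0 < u i
  ha : (∑ i ∈ Finset.Icc 1 n, u i) + u n = u (n + 1)
  hb : ∀ i, 1 ≤ i → i ≤ n - 1 → 2 * (∑ j ∈ Finset.Icc 1 i, u j) < u (i + 1)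

variable {n : ℕ} {u : ℕ → ℕ}

lemma sigma_mono {I K : Finset ℕ} (h : I ⊆ K) : σ u I ≤ σ u K :=
  Finset.sum_le_sum_of_subset h

lemma mem_cube {v : ℕ} {J : Finset ℕ} : v ∈ cube u J ↔ ∃ I, I ⊆ J ∧ σ u I = v := by
  classical
  induction J using Finset.induction_on generalizing v with
  | empty =>
    simp [cube, σ, Finset.subset_empty, eq_comm]
  | @insert a J ha ih =>
    unfold cube at *
    rw [Finset.sum_insert ha]
    constructor
    · intro hv
      rw [Finset.mem_add] at hv
      obtain ⟨x, hx, y, hy, hxy⟩ := hv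
      obtain ⟨I, hIJ, hI⟩ := ih.mp hy
      rcases Finset.mem_insert.mp hx with rfl | hx
      · exact ⟨I, hIJ.trans (Finset.subset_insert _ _), by omega⟩
      · have hx : x = u a := by simpa using hx
        refine ⟨insert a I, Finset.insert_subset_insert _ hIJ, ?_⟩
        rw [σ, Finset.sum_insert (fun hmem => ha (hIJ hmem))]
        have hσ : σ u I = ∑ i ∈ I, u i := rfl
        omega
    · rintro ⟨I, hIJ, rfl⟩
      rw [Finset.mem_add]
      by_cases haI : a ∈ I
      · refine ⟨u a, by simp, σ u (I.erase a), ih.mpr ⟨I.erase a, ?_, rfl⟩, ?_⟩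
        · intro i hi
          have := hIJ (Finset.mem_of_mem_erase hi)
          rcases Finset.mem_insert.mp this with rfl | h
          · exact absurd rfl (Finset.ne_of_mem_erase hi)
          · exact h
        · rw [σ, Finset.add_sum_erase _ _ haI]; rfl
      · refine ⟨0, by simp, σ u I, ih.mpr ⟨I, ?_, rfl⟩, by omega⟩
        intro i hi
        rcases Finset.mem_insert.mp (hIJ hi) with rfl | h
        · exact absurd hi haI
        · exact h

lemma sigma_mem_cube {I J : Finset ℕ} (h : I ⊆ J) : σ u I ∈ cube u J :=
  mem_cube.mpr ⟨I, h, rfl⟩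

lemma zero_mem_cube {J : Finset ℕ} : 0 ∈ cube u J :=
  mem_cube.mpr ⟨∅, Finset.empty_subset _, rfl⟩

lemma le_of_mem_cube {v : ℕ} {J : Finset ℕ} (h : v ∈ cube u J) : v ≤ σ u J := by
  obtain ⟨I, hIJ, rfl⟩ := mem_cube.mp h
  exact sigma_mono hIJ

lemma two_s_lt (h : H n u) {m : ℕ} (h1 : 1 ≤ m) (h2 : m ≤ n) :
    2 * σ u (Finset.Icc 1 (m - 1)) < u m := by
  rcases Nat.eq_or_lt_of_le h1 with rfl | hm
  · simp [σ, show (1:ℕ) - 1 = 0 from rfl]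
    exact h.hpos 1 le_rfl (by omega)
  · have := h.hb (m - 1) (by omega) (by omega)
    rw [show m - 1 + 1 = m by omega] at this
    exact this

lemma cancel {A B x y c : ℕ} (hA : A < c) (hB : B < c) (h : A + x * c = B + y * c) :
    x = y ∧ A = B := by
  have hc : 0 < c := by omega
  have hle : ∀ {A' B' x' y' : ℕ}, A' < c → B' < c → A' + x' * c = B' + y' * c → x' ≤ y' := by
    intro A' B' x' y' hA' hB' h'
    have : x' * c < (y' + 1) * c := by
      calc x' * c ≤ A' + x' * c := by omega
      _ = B' + y' * c := h'
      _ < (y' + 1) * c := by rw [add_mul]; omega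
    have := Nat.lt_of_mul_lt_mul_right this
    omega
  have h1 : x ≤ y := hle hA hB h
  have h2 : y ≤ x := hle hB hA h.symm
  have : x = y := le_antisymm h1 h2
  subst this
  omega

def ind (I : Finset ℕ) (i : ℕ) : ℕ := if i ∈ I then 1 else 0

lemma ind_le_one {I : Finset ℕ} {i : ℕ} : ind I i ≤ 1 := by
  unfold ind; split <;> omega

lemma sum_ind {I K : Finset ℕ} (h : I ⊆ K) : ∑ i ∈ K, ind I i * u i = σ u I := by
  rw [σ, ← Finset.sum_subset h (by intro i _ hi; simp [ind, hi])]
  apply Finset.sum_congr rfl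
  intro i hi
  simp [ind, hi]

lemma coeff (h : H n u) {a b : ℕ → ℕ} (ha2 : ∀ i, 1 ≤ i → i ≤ n - 1 → a i ≤ 2)
    (hb2 : ∀ i, 1 ≤ i → i ≤ n - 1 → b i ≤ 2) :
    ∀ m, m ≤ n → (∑ i ∈ Finset.Icc 1 m, a i * u i) = (∑ i ∈ Finset.Icc 1 m, b i * u i) →
      ∀ i, 1 ≤ i → i ≤ m → a i = b i := by
  intro m
  induction m with
  | zero => intro _ _ i h1 h2; omega
  | succ m ih =>
    intro hm heq i h1 h2
    rw [Finset.sum_Icc_succ_top (by omega), Finset.sum_Icc_succ_top (by omega)] at heq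
    have hbnd : ∀ c : ℕ → ℕ, (∀ i, 1 ≤ i → i ≤ n - 1 → c i ≤ 2) →
        (∑ i ∈ Finset.Icc 1 m, c i * u i) < u (m + 1) := by
      intro c hc
      have h1 : (∑ i ∈ Finset.Icc 1 m, c i * u i) ≤ ∑ i ∈ Finset.Icc 1 m, 2 * u i := by
        apply Finset.sum_le_sum
        intro i hi
        have := Finset.mem_Icc.mp hi
        exact Nat.mul_le_mul_right _ (hc i this.1 (by omega))
      have h2 : (∑ i ∈ Finset.Icc 1 m, 2 * u i) = 2 * σ u (Finset.Icc 1 m) := by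
        rw [σ, Finset.mul_sum]
      have h3 := two_s_lt h (m := m + 1) (by omega) (by omega)
      simp only [Nat.add_sub_cancel] at h3
      omega
    obtain ⟨hab, hAB⟩ := cancel (hbnd a ha2) (hbnd b hb2) heq
    rcases Nat.lt_or_ge i (m + 1) with hi | hi
    · exact ih (by omega) hAB i h1 (by omega)
    · have : i = m + 1 := by omega
      subst this; exact hab

lemma subset_Icc_n {I : Finset ℕ} (hI : I ⊆ Finset.Icc 1 (n + 1)) (hn1 : (n + 1) ∉ I) :
    I ⊆ Finset.Icc 1 n := by
  intro i hi
  have := Finset.mem_Icc.mp (hI hi)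
  have : i ≠ n + 1 := fun he => hn1 (he ▸ hi)
  simp only [Finset.mem_Icc]
  have := Finset.mem_Icc.mp (hI hi)
  omega

lemma sigma_strip {I : Finset ℕ} (hn1 : (n + 1) ∈ I) :
    σ u I = σ u (I.erase (n + 1)) + u (n + 1) := by
  rw [σ, σ, Finset.sum_erase_add _ _ hn1]

lemma eq_of_sigma_eq_n (h : H n u) {I K : Finset ℕ} (hI : I ⊆ Finset.Icc 1 n)
    (hK : K ⊆ Finset.Icc 1 n) (heq : σ u I = σ u K) : I = K := by
  have key := coeff h (a := ind I) (b := ind K)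
    (fun i _ _ => le_trans ind_le_one (by omega)) (fun i _ _ => le_trans ind_le_one (by omega))
    n le_rfl (by rw [sum_ind hI, sum_ind hK]; exact heq)
  ext i
  constructor
  · intro hi
    have hin := Finset.mem_Icc.mp (hI hi)
    have := key i hin.1 hin.2
    simp only [ind, hi, if_true] at this
    by_contra hK'
    simp [hK'] at this
  · intro hi
    have hin := Finset.mem_Icc.mp (hK hi)
    have := key i hin.1 hin.2
    simp only [ind, hi, if_true] at this
    by_contra hI'
    simp [hI'] at this

lemma u_big (h : H n u) : σ u (Finset.Icc 1 n) < u (n + 1) := by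
  have h1 : σ u (Finset.Icc 1 n) + u n = u (n + 1) := h.ha
  have hn := h.hn
  have := h.hpos n (by omega) (by omega)
  omega

lemma sigma_inj (h : H n u) {I K : Finset ℕ} (hI : I ⊆ Finset.Icc 1 (n + 1))
    (hK : K ⊆ Finset.Icc 1 (n + 1)) (heq : σ u I = σ u K) : I = K := by
  by_cases hI1 : (n + 1) ∈ I <;> by_cases hK1 : (n + 1) ∈ K
  · have e1 := sigma_strip (u := u) hI1
    have e2 := sigma_strip (u := u) hK1
    have heq' : σ u (I.erase (n + 1)) = σ u (K.erase (n + 1)) := by omega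
    have := eq_of_sigma_eq_n h (subset_Icc_n (Finset.erase_subset_iff_of_mem (hI hI1) |>.mpr hI)
      (Finset.notMem_erase _ _)) (subset_Icc_n (Finset.erase_subset_iff_of_mem (hK hK1) |>.mpr hK)
      (Finset.notMem_erase _ _)) heq'
    have eI := Finset.insert_erase hI1
    have eK := Finset.insert_erase hK1
    rw [← eI, ← eK, this]
  · exfalso
    have h1 : u (n + 1) ≤ σ u I := Finset.single_le_sum (fun i _ => Nat.zero_le _) hI1
    have h2 : σ u K ≤ σ u (Finset.Icc 1 n) := sigma_mono (subset_Icc_n hK hK1)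
    have := u_big h
    omega
  · exfalso
    have h1 : u (n + 1) ≤ σ u K := Finset.single_le_sum (fun i _ => Nat.zero_le _) hK1
    have h2 : σ u I ≤ σ u (Finset.Icc 1 n) := sigma_mono (subset_Icc_n hI hI1)
    have := u_big h
    omega
  · exact eq_of_sigma_eq_n h (subset_Icc_n hI hI1) (subset_Icc_n hK hK1) heq

lemma ind_mem {I : Finset ℕ} {i : ℕ} (h : i ∈ I) : ind I i = 1 := if_pos h
lemma ind_not_mem {I : Finset ℕ} {i : ℕ} (h : i ∉ I) : ind I i = 0 := if_neg h

lemma sigma_Icc_succ : σ u (Finset.Icc 1 (n + 1)) = σ u (Finset.Icc 1 n) + u (n + 1) :=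
  Finset.sum_Icc_succ_top (by omega) _

lemma collision (h : H n u) {I1 I2 K : Finset ℕ} (h1 : I1 ⊆ Finset.Icc 1 (n + 1))
    (h2 : I2 ⊆ Finset.Icc 1 (n + 1)) (hK : K ⊆ Finset.Icc 1 (n + 1))
    (heq : σ u I1 + σ u I2 = σ u K) (hd : ¬ Disjoint I1 I2) :
    n ∈ I1 ∧ n ∈ I2 ∧ (n + 1) ∉ I1 ∧ (n + 1) ∉ I2 ∧ I1 ∪ I2 = Finset.Icc 1 n ∧
      K = insert (n + 1) ((I1 ∩ I2).erase n) := by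
  obtain ⟨d, hd1, hd2⟩ := Finset.not_disjoint_iff.mp hd
  have hnn := h.hn
  have hub := u_big h
  have hha : σ u (Finset.Icc 1 n) + u n = u (n + 1) := h.ha
  have hKmax : σ u K ≤ σ u (Finset.Icc 1 n) + u (n + 1) := by
    have := sigma_mono (u := u) hK
    rw [sigma_Icc_succ] at this
    exact this
  have honeside : ∀ (A B : Finset ℕ), A ⊆ Finset.Icc 1 (n + 1) → B ⊆ Finset.Icc 1 (n + 1) →
      (n + 1) ∈ A → (n + 1) ∉ B → (∃ a, a ∈ A ∧ a ∈ B) → σ u A + σ u B = σ u K → False := by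
    rintro A B hA hB hA1 hB1 ⟨a, haA, haB⟩ heq'
    have hKn1 : (n + 1) ∈ K := by
      by_contra hc
      have hx : σ u K ≤ σ u (Finset.Icc 1 n) := sigma_mono (subset_Icc_n hK hc)
      have hy : u (n + 1) ≤ σ u A := Finset.single_le_sum (fun i _ => Nat.zero_le _) hA1
      omega
    have eA := sigma_strip (u := u) hA1
    have eK := sigma_strip (u := u) hKn1
    have hA' : A.erase (n + 1) ⊆ Finset.Icc 1 n :=
      subset_Icc_n ((Finset.erase_subset _ _).trans hA) (Finset.notMem_erase _ _)
    have hB' : B ⊆ Finset.Icc 1 n := subset_Icc_n hB hB1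
    have hK' : K.erase (n + 1) ⊆ Finset.Icc 1 n :=
      subset_Icc_n ((Finset.erase_subset _ _).trans hK) (Finset.notMem_erase _ _)
    have heq'' : σ u (A.erase (n + 1)) + σ u B = σ u (K.erase (n + 1)) := by omega
    have key := coeff h (a := fun i => ind (A.erase (n + 1)) i + ind B i)
      (b := ind (K.erase (n + 1)))
      (fun i _ _ => Nat.add_le_add ind_le_one ind_le_one)
      (fun i _ _ => le_trans ind_le_one (by omega)) n le_rfl
      (by
        simp only [add_mul, Finset.sum_add_distrib]
        rw [sum_ind hA', sum_ind hB', sum_ind hK']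
        exact heq'')
    have haA' : a ∈ A.erase (n + 1) := Finset.mem_erase.mpr ⟨fun he => hB1 (he ▸ haB), haA⟩
    have haIcc := Finset.mem_Icc.mp (hB' haB)
    have e : ind (A.erase (n + 1)) a + ind B a = ind (K.erase (n + 1)) a := key a haIcc.1 haIcc.2
    rw [ind_mem haA', ind_mem haB] at e
    have := ind_le_one (I := K.erase (n + 1)) (i := a)
    omega
  by_cases a1 : (n + 1) ∈ I1 <;> by_cases a2 : (n + 1) ∈ I2
  · exfalso
    have b1 : u (n + 1) ≤ σ u I1 := Finset.single_le_sum (fun i _ => Nat.zero_le _) a1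
    have b2 : u (n + 1) ≤ σ u I2 := Finset.single_le_sum (fun i _ => Nat.zero_le _) a2
    omega
  · exact (honeside I1 I2 h1 h2 a1 a2 ⟨d, hd1, hd2⟩ heq).elim
  · exact (honeside I2 I1 h2 h1 a2 a1 ⟨d, hd2, hd1⟩ (by omega)).elim
  · -- neither contains n+1
    have hI1n : I1 ⊆ Finset.Icc 1 n := subset_Icc_n h1 a1
    have hI2n : I2 ⊆ Finset.Icc 1 n := subset_Icc_n h2 a2
    have hKn1 : (n + 1) ∈ K := by
      by_contra hc
      have hKn : K ⊆ Finset.Icc 1 n := subset_Icc_n hK hc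
      have key := coeff h (a := fun i => ind I1 i + ind I2 i) (b := ind K)
        (fun i _ _ => Nat.add_le_add ind_le_one ind_le_one)
        (fun i _ _ => le_trans ind_le_one (by omega)) n le_rfl
        (by
          simp only [add_mul, Finset.sum_add_distrib]
          rw [sum_ind hI1n, sum_ind hI2n, sum_ind hKn]
          exact heq)
      have hdIcc := Finset.mem_Icc.mp (hI1n hd1)
      have e : ind I1 d + ind I2 d = ind K d := key d hdIcc.1 hdIcc.2
      rw [ind_mem hd1, ind_mem hd2] at e
      have := ind_le_one (I := K) (i := d)
      omega
    have eK := sigma_strip (u := u) hKn1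
    have hK' : K.erase (n + 1) ⊆ Finset.Icc 1 n :=
      subset_Icc_n ((Finset.erase_subset _ _).trans hK) (Finset.notMem_erase _ _)
    have hsing : ({n} : Finset ℕ) ⊆ Finset.Icc 1 n := by
      simp only [Finset.singleton_subset_iff, Finset.mem_Icc]; omega
    have heq'' : σ u I1 + σ u I2 =
        σ u (K.erase (n + 1)) + σ u (Finset.Icc 1 n) + σ u {n} := by
      have : σ u {n} = u n := Finset.sum_singleton _ _
      omega
    have key := coeff h (a := fun i => ind I1 i + ind I2 i)
      (b := fun i => ind (K.erase (n + 1)) i + ind (Finset.Icc 1 n) i + ind {n} i)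
      (fun i _ _ => Nat.add_le_add ind_le_one ind_le_one)
      (fun i hi1 hi2 => by
        show ind (K.erase (n + 1)) i + ind (Finset.Icc 1 n) i + ind ({n} : Finset ℕ) i ≤ 2
        have e1 : ind ({n} : Finset ℕ) i = 0 := ind_not_mem (by
          simp only [Finset.mem_singleton]; omega)
        have := ind_le_one (I := K.erase (n + 1)) (i := i)
        have := ind_le_one (I := Finset.Icc 1 n) (i := i)
        omega) n le_rfl
      (by
        simp only [add_mul, Finset.sum_add_distrib]
        rw [sum_ind hI1n, sum_ind hI2n, sum_ind hK', sum_ind (Finset.Subset.refl _),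
          sum_ind hsing]
        exact heq'')
    have en : ind I1 n + ind I2 n = ind (K.erase (n + 1)) n + ind (Finset.Icc 1 n) n + ind ({n} : Finset ℕ) n := key n (by omega) le_rfl
    rw [ind_mem (Finset.mem_Icc.mpr ⟨by omega, le_rfl⟩), ind_mem (Finset.mem_singleton_self n)] at en
    have bn1 := ind_le_one (I := I1) (i := n)
    have bn2 := ind_le_one (I := I2) (i := n)
    have bnK := ind_le_one (I := K.erase (n + 1)) (i := n)
    have hnI1 : n ∈ I1 := by
      by_contra hc; rw [ind_not_mem hc] at en; omega
    have hnI2 : n ∈ I2 := by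
      by_contra hc; rw [ind_not_mem hc] at en; omega
    have hnK' : n ∉ K.erase (n + 1) := by
      by_contra hc; rw [ind_mem hnI1, ind_mem hnI2, ind_mem hc] at en; omega
    refine ⟨hnI1, hnI2, a1, a2, ?_, ?_⟩
    · ext i
      simp only [Finset.mem_union, Finset.mem_Icc]
      constructor
      · rintro (hi | hi)
        · exact Finset.mem_Icc.mp (hI1n hi)
        · exact Finset.mem_Icc.mp (hI2n hi)
      · rintro ⟨hi1, hi2⟩
        rcases Nat.eq_or_lt_of_le hi2 with rfl | hilt
        · exact Or.inl hnI1
        · have e : ind I1 i + ind I2 i = ind (K.erase (n + 1)) i + ind (Finset.Icc 1 n) i + ind ({n} : Finset ℕ) i := key i hi1 (by omega)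
          have e1 : ind (Finset.Icc 1 n) i = 1 := ind_mem (Finset.mem_Icc.mpr ⟨hi1, by omega⟩)
          have e2 : ind ({n} : Finset ℕ) i = 0 := ind_not_mem (by
            simp only [Finset.mem_singleton]; omega)
          by_contra hc
          push_neg at hc
          rw [ind_not_mem hc.1, ind_not_mem hc.2, e1, e2] at e
          omega
    · ext i
      simp only [Finset.mem_insert, Finset.mem_erase, Finset.mem_inter]
      constructor
      · intro hi
        by_cases hie : i = n + 1
        · exact Or.inl hie
        · right
          have hiK' : i ∈ K.erase (n + 1) := Finset.mem_erase.mpr ⟨hie, hi⟩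
          have hiIcc := Finset.mem_Icc.mp (hK' hiK')
          have hin : i ≠ n := fun he => hnK' (he ▸ hiK')
          have e : ind I1 i + ind I2 i = ind (K.erase (n + 1)) i + ind (Finset.Icc 1 n) i + ind ({n} : Finset ℕ) i := key i hiIcc.1 hiIcc.2
          have e1 : ind (Finset.Icc 1 n) i = 1 := ind_mem (Finset.mem_Icc.mpr hiIcc)
          have e2 : ind ({n} : Finset ℕ) i = 0 := ind_not_mem (by
            simp only [Finset.mem_singleton]; omega)
          rw [ind_mem hiK', e1, e2] at e
          have b1 := ind_le_one (I := I1) (i := i)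
          have b2 := ind_le_one (I := I2) (i := i)
          refine ⟨hin, ?_, ?_⟩
          · by_contra hc; rw [ind_not_mem hc] at e; omega
          · by_contra hc; rw [ind_not_mem hc] at e; omega
      · rintro (rfl | ⟨hin, hi1, hi2⟩)
        · exact hKn1
        · have hiIcc := Finset.mem_Icc.mp (hI1n hi1)
          have e : ind I1 i + ind I2 i = ind (K.erase (n + 1)) i + ind (Finset.Icc 1 n) i + ind ({n} : Finset ℕ) i := key i hiIcc.1 hiIcc.2
          have e1 : ind (Finset.Icc 1 n) i = 1 := ind_mem (Finset.mem_Icc.mpr hiIcc)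
          have e2 : ind ({n} : Finset ℕ) i = 0 := ind_not_mem (by
            simp only [Finset.mem_singleton]; exact hin)
          rw [ind_mem hi1, ind_mem hi2, e1, e2] at e
          have : i ∈ K.erase (n + 1) := by
            by_contra hc; rw [ind_not_mem hc] at e; omega
          exact Finset.mem_of_mem_erase this

lemma cube_empty : cube u (∅ : Finset ℕ) = {0} := by
  rw [cube, Finset.sum_empty]; rfl

lemma cube_insert {a : ℕ} {J : Finset ℕ} (ha : a ∉ J) :
    cube u (insert a J) = ({0, u a} : Finset ℕ) + cube u J := by
  rw [cube, Finset.sum_insert ha]; rfl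

lemma pair_add (t : ℕ) (S : Finset ℕ) :
    ({0, t} : Finset ℕ) + S = S ∪ S.image (· + t) := by
  ext v
  simp only [Finset.mem_add, Finset.mem_union, Finset.mem_image, Finset.mem_insert,
    Finset.mem_singleton]
  constructor
  · rintro ⟨x, (rfl | rfl), y, hy, rfl⟩
    · left; simpa using hy
    · right; exact ⟨y, hy, by omega⟩
  · rintro (hv | ⟨y, hy, rfl⟩)
    · exact ⟨0, Or.inl rfl, v, hv, by omega⟩
    · exact ⟨t, Or.inr rfl, y, hy, by omega⟩

lemma Aset_eq : Aset n u = cube u (Finset.Icc 1 (n - 1)) := by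
  ext v
  rw [mem_cube]
  simp only [Aset, Finset.mem_image, Finset.mem_powerset, σ]

lemma Uset_eq : Uset n u = cube u (Finset.Icc 1 (n + 1)) := rfl

lemma Bset_eq :
    Bset n u = cube u (insert (n + 1) (Finset.Icc 1 (n - 1))) ∪ {σ u (Finset.Icc 1 n)} := by
  rw [cube_insert (by simp only [Finset.mem_Icc]; omega), pair_add, ← Aset_eq]
  rfl

lemma pairCases (h : H n u) {J X Y : Finset ℕ} (hJ : J ⊆ Finset.Icc 1 (n + 1))
    (hXY : cube u J = X + Y) {Ix Iy : Finset ℕ} (hIx : Ix ⊆ Finset.Icc 1 (n + 1))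
    (hIy : Iy ⊆ Finset.Icc 1 (n + 1)) (hx : σ u Ix ∈ X) (hy : σ u Iy ∈ Y) :
    (Disjoint Ix Iy ∧ σ u Ix + σ u Iy = σ u (Ix ∪ Iy) ∧ Ix ∪ Iy ⊆ J) ∨
    (n ∈ Ix ∧ n ∈ Iy ∧ (n + 1) ∉ Ix ∧ (n + 1) ∉ Iy ∧ Ix ∪ Iy = Finset.Icc 1 n ∧
      insert (n + 1) ((Ix ∩ Iy).erase n) ⊆ J ∧
      σ u Ix + σ u Iy = σ u (insert (n + 1) ((Ix ∩ Iy).erase n))) := by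
  have hmem : σ u Ix + σ u Iy ∈ cube u J := by
    rw [hXY]; exact Finset.add_mem_add hx hy
  obtain ⟨K, hKJ, hKeq⟩ := mem_cube.mp hmem
  by_cases hdisj : Disjoint Ix Iy
  · left
    have hs : σ u Ix + σ u Iy = σ u (Ix ∪ Iy) := (Finset.sum_union hdisj).symm
    have hKeq2 : K = Ix ∪ Iy :=
      sigma_inj h (hKJ.trans hJ) (Finset.union_subset hIx hIy) (by omega)
    refine ⟨hdisj, hs, ?_⟩
    rw [← hKeq2]; exact hKJ
  · right
    obtain ⟨c1, c2, c3, c4, c5, c6⟩ := collision h hIx hIy (hKJ.trans hJ) hKeq.symm hdisj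
    exact ⟨c1, c2, c3, c4, c5, by rw [← c6]; exact hKJ, by rw [← c6]; omega⟩

lemma subset_of_add_left {X Y C : Finset ℕ} (hXY : C = X + Y) (h0Y : 0 ∈ Y) : X ⊆ C := by
  intro x hx
  have : x + 0 ∈ X + Y := Finset.add_mem_add hx h0Y
  rw [hXY]; simpa using this

lemma subset_of_add_right {X Y C : Finset ℕ} (hXY : C = X + Y) (h0X : 0 ∈ X) : Y ⊆ C := by
  intro y hy
  have : 0 + y ∈ X + Y := Finset.add_mem_add h0X hy
  rw [hXY]; simpa using this

lemma max_decomp (h : H n u) {J X Y : Finset ℕ} (hJ : J ⊆ Finset.Icc 1 (n + 1))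
    (hXY : cube u J = X + Y) (h0X : 0 ∈ X) (h0Y : 0 ∈ Y) :
    ∃ P Q, P ⊆ J ∧ Q ⊆ J ∧ σ u P ∈ X ∧ σ u Q ∈ Y ∧ (∀ x ∈ X, x ≤ σ u P) ∧
      (∀ y ∈ Y, y ≤ σ u Q) ∧ σ u P + σ u Q = σ u J := by
  have hXne : X.Nonempty := ⟨0, h0X⟩
  have hYne : Y.Nonempty := ⟨0, h0Y⟩
  obtain ⟨P, hPJ, hPx⟩ := mem_cube.mp (subset_of_add_left hXY h0Y (X.max'_mem hXne))
  obtain ⟨Q, hQJ, hQy⟩ := mem_cube.mp (subset_of_add_right hXY h0X (Y.max'_mem hYne))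
  have hmx : ∀ x ∈ X, x ≤ σ u P := by rw [hPx]; exact fun x hx => X.le_max' x hx
  have hmy : ∀ y ∈ Y, y ≤ σ u Q := by rw [hQy]; exact fun y hy => Y.le_max' y hy
  refine ⟨P, Q, hPJ, hQJ, by rw [hPx]; exact X.max'_mem hXne, by rw [hQy]; exact Y.max'_mem hYne,
    hmx, hmy, ?_⟩
  have h1 : σ u P + σ u Q ≤ σ u J := by
    have : σ u P + σ u Q ∈ cube u J := by
      rw [hXY]
      exact Finset.add_mem_add (by rw [hPx]; exact X.max'_mem hXne)
        (by rw [hQy]; exact Y.max'_mem hYne)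
    exact le_of_mem_cube this
  have h2 : σ u J ≤ σ u P + σ u Q := by
    have : σ u J ∈ X + Y := by rw [← hXY]; exact sigma_mem_cube (Finset.Subset.refl _)
    rw [Finset.mem_add] at this
    obtain ⟨x, hx, y, hy, hxy⟩ := this
    have := hmx x hx
    have := hmy y hy
    omega
  omega

lemma half (h : H n u) {J X Y P Q : Finset ℕ} (hJ : J ⊆ Finset.Icc 1 (n + 1))
    (hXY : cube u J = X + Y) (hPQ : Disjoint P Q) (hPQJ : P ∪ Q = J)
    (hXP : ∀ x ∈ X, x ∈ cube u P) (hYQ : ∀ y ∈ Y, y ∈ cube u Q) : X = cube u P := by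
  have hPJ : P ⊆ J := by rw [← hPQJ]; exact Finset.subset_union_left
  have hQJ : Q ⊆ J := by rw [← hPQJ]; exact Finset.subset_union_right
  apply Finset.Subset.antisymm (fun x hx => hXP x hx)
  intro v hv
  obtain ⟨I, hIP, rfl⟩ := mem_cube.mp hv
  have hIQ : I ∪ Q ⊆ J := Finset.union_subset ((hIP.trans hPJ)) hQJ
  have hmem : σ u (I ∪ Q) ∈ cube u J := sigma_mem_cube hIQ
  rw [hXY, Finset.mem_add] at hmem
  obtain ⟨x, hxX, y, hyY, hxy⟩ := hmem
  obtain ⟨Ix, hIxP, rfl⟩ := mem_cube.mp (hXP x hxX)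
  obtain ⟨Iy, hIyQ, rfl⟩ := mem_cube.mp (hYQ y hyY)
  have hdisj : Disjoint Ix Iy := hPQ.mono hIxP hIyQ
  have hsum : σ u (Ix ∪ Iy) = σ u (I ∪ Q) := by
    rw [σ, Finset.sum_union hdisj]; exact hxy
  have hU : Ix ∪ Iy = I ∪ Q :=
    sigma_inj h (Finset.union_subset ((hIxP.trans hPJ).trans hJ) ((hIyQ.trans hQJ).trans hJ))
      (hIQ.trans hJ) hsum
  have hIxI : Ix = I := by
    ext i
    constructor
    · intro hi
      have : i ∈ I ∪ Q := hU ▸ Finset.mem_union_left _ hi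
      rcases Finset.mem_union.mp this with h' | h'
      · exact h'
      · exact absurd (hPQ.forall_ne_finset (hIxP hi) h') (fun f => f rfl)
    · intro hi
      have : i ∈ Ix ∪ Iy := hU.symm ▸ Finset.mem_union_left _ hi
      rcases Finset.mem_union.mp this with h' | h'
      · exact h'
      · exact absurd (hPQ.forall_ne_finset (hIP hi) (hIyQ h')) (fun f => f rfl)
  rw [← hIxI]
  exact hxX

lemma main_disjoint (h : H n u) {J X Y : Finset ℕ} (hJ : J ⊆ Finset.Icc 1 (n + 1))
    (hXY : cube u J = X + Y) (h0X : 0 ∈ X) (h0Y : 0 ∈ Y) (hX : X ≠ {0}) (hY : Y ≠ {0})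
    (hnc : ∀ Ix Iy, Ix ⊆ Finset.Icc 1 (n + 1) → Iy ⊆ Finset.Icc 1 (n + 1) →
      σ u Ix ∈ X → σ u Iy ∈ Y → Disjoint Ix Iy) :
    ∃ J1 J2, Disjoint J1 J2 ∧ J1 ∪ J2 = J ∧ J1.Nonempty ∧ J2.Nonempty ∧
      X = cube u J1 ∧ Y = cube u J2 := by
  obtain ⟨P, Q, hPJ, hQJ, hPX, hQY, hmaxX, hmaxY, hsum⟩ := max_decomp h hJ hXY h0X h0Y
  have hPQ : Disjoint P Q := hnc P Q (hPJ.trans hJ) (hQJ.trans hJ) hPX hQY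
  have hPQJ : P ∪ Q = J := by
    apply sigma_inj h (Finset.union_subset (hPJ.trans hJ) (hQJ.trans hJ)) hJ
    rw [σ, Finset.sum_union hPQ]
    exact hsum
  have hXP : ∀ x ∈ X, x ∈ cube u P := by
    intro x hx
    obtain ⟨Ix, hIxJ, rfl⟩ := mem_cube.mp (subset_of_add_left hXY h0Y hx)
    have hdisj := hnc Ix Q (hIxJ.trans hJ) (hQJ.trans hJ) hx hQY
    refine mem_cube.mpr ⟨Ix, ?_, rfl⟩
    intro i hi
    have : i ∈ P ∪ Q := hPQJ.symm ▸ hIxJ hi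
    rcases Finset.mem_union.mp this with h' | h'
    · exact h'
    · exact absurd (hdisj.forall_ne_finset hi h') (fun f => f rfl)
  have hYQ : ∀ y ∈ Y, y ∈ cube u Q := by
    intro y hy
    obtain ⟨Iy, hIyJ, rfl⟩ := mem_cube.mp (subset_of_add_right hXY h0X hy)
    have hdisj := hnc P Iy (hPJ.trans hJ) (hIyJ.trans hJ) hPX hy
    refine mem_cube.mpr ⟨Iy, ?_, rfl⟩
    intro i hi
    have : i ∈ P ∪ Q := hPQJ.symm ▸ hIyJ hi
    rcases Finset.mem_union.mp this with h' | h'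
    · exact absurd (hdisj.forall_ne_finset h' hi) (fun f => f rfl)
    · exact h'
  have hXeq : X = cube u P := half h hJ hXY hPQ hPQJ hXP hYQ
  have hYeq : Y = cube u Q := by
    refine half h hJ ?_ hPQ.symm (by rw [Finset.union_comm]; exact hPQJ) hYQ hXP
    rw [hXY, add_comm]
  refine ⟨P, Q, hPQ, hPQJ, ?_, ?_, hXeq, hYeq⟩
  · rcases Finset.eq_empty_or_nonempty P with rfl | hne
    · rw [cube_empty] at hXeq; exact absurd hXeq hX
    · exact hne
  · rcases Finset.eq_empty_or_nonempty Q with rfl | hne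
    · rw [cube_empty] at hYeq; exact absurd hYeq hY
    · exact hne

lemma sigma_singleton {i : ℕ} : σ u {i} = u i := Finset.sum_singleton _ _

lemma Icc_erase_top (hn : 1 ≤ n) : (Finset.Icc 1 n).erase n = Finset.Icc 1 (n - 1) := by
  ext i
  simp only [Finset.mem_erase, Finset.mem_Icc]
  omega

lemma main_exotic (h : H n u) {X Y P Q : Finset ℕ}
    (hXY : cube u (Finset.Icc 1 (n + 1)) = X + Y) (h0X : 0 ∈ X) (h0Y : 0 ∈ Y)
    (hP : P ⊆ Finset.Icc 1 (n + 1)) (hQ : Q ⊆ Finset.Icc 1 (n + 1))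
    (hPQ : Disjoint P Q) (hPQJ : P ∪ Q = Finset.Icc 1 (n + 1))
    (hPX : σ u P ∈ X) (hQY : σ u Q ∈ Y)
    (hcol : ∃ Ix Iy, Ix ⊆ Finset.Icc 1 (n + 1) ∧ Iy ⊆ Finset.Icc 1 (n + 1) ∧
      σ u Ix ∈ X ∧ σ u Iy ∈ Y ∧ ¬ Disjoint Ix Iy)
    (hQn1 : (n + 1) ∈ Q) :
    X = {0, u n} ∧ Y = Bset n u := by
  have hnn := h.hn
  have hJ : Finset.Icc 1 (n + 1) ⊆ Finset.Icc 1 (n + 1) := Finset.Subset.refl _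
  have hIccn : Finset.Icc 1 n ⊆ Finset.Icc 1 (n + 1) := by
    intro i hi; simp only [Finset.mem_Icc] at *; omega
  have hsn : ({n} : Finset ℕ) ⊆ Finset.Icc 1 (n + 1) := by
    simp only [Finset.singleton_subset_iff, Finset.mem_Icc]; omega
  have hposn : 0 < u n := h.hpos n (by omega) (by omega)
  -- (e1) every element of X has support inside P
  have hXsub : ∀ Ix, Ix ⊆ Finset.Icc 1 (n + 1) → σ u Ix ∈ X → Ix ⊆ P := by
    intro Ix hIx hx
    rcases pairCases h hJ hXY hIx hQ hx hQY with ⟨hdisj, _, _⟩ | ⟨_, _, _, hno, _, _⟩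
    · intro i hi
      have : i ∈ P ∪ Q := by rw [hPQJ]; exact hIx hi
      rcases Finset.mem_union.mp this with h' | h'
      · exact h'
      · exact absurd (hdisj.forall_ne_finset hi h') (fun f => f rfl)
    · exact absurd hQn1 hno
  -- (e2) the collision pair
  obtain ⟨Ix0, Iy0, hIx0, hIy0, hx0, hy0, hnd0⟩ := hcol
  have hcc := pairCases h hJ hXY hIx0 hIy0 hx0 hy0
  rcases hcc with ⟨hd, _, _⟩ | ⟨c1, c2, c3, c4, c5, c6, c7⟩
  · exact absurd hd hnd0
  have hnP : n ∈ P := hXsub Ix0 hIx0 hx0 c1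
  have hnQ : n ∉ Q := fun hc => (hPQ.forall_ne_finset hnP hc) rfl
  -- (e5-e7) u n ∈ X
  have hunX : σ u {n} ∈ X := by
    have hmem : σ u {n} ∈ cube u (Finset.Icc 1 (n + 1)) := sigma_mem_cube hsn
    rw [hXY, Finset.mem_add] at hmem
    obtain ⟨x, hx, y, hy, hxy⟩ := hmem
    obtain ⟨Jx, hJx, rfl⟩ := mem_cube.mp (subset_of_add_left hXY h0Y hx)
    obtain ⟨Jy, hJy, rfl⟩ := mem_cube.mp (subset_of_add_right hXY h0X hy)
    rcases pairCases h hJ hXY hJx hJy hx hy with ⟨hd, hs, _⟩ | ⟨d1, d2, _, _, _, _, _⟩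
    · have hU : Jx ∪ Jy = {n} :=
        sigma_inj h (Finset.union_subset hJx hJy) hsn (by rw [← hs, hxy])
      by_cases hnx : n ∈ Jx
      · have hJyE : Jy = ∅ := by
          rcases Finset.eq_empty_or_nonempty Jy with rfl | ⟨i, hi⟩
          · rfl
          · exfalso
            have : i ∈ ({n} : Finset ℕ) := hU ▸ Finset.mem_union_right _ hi
            rw [Finset.mem_singleton] at this
            subst this
            exact (hd.forall_ne_finset hnx hi) rfl
        have hJxn : Jx = {n} := by
          apply Finset.Subset.antisymm
          · rw [← hU]; exact Finset.subset_union_left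
          · simp only [Finset.singleton_subset_iff]; exact hnx
        rw [← hJxn]; exact hx
      · exfalso
        -- u n ∈ Y : derive a contradiction
        have hnJy : n ∈ Jy := by
          have : n ∈ Jx ∪ Jy := hU.symm ▸ Finset.mem_singleton_self n
          rcases Finset.mem_union.mp this with h' | h'
          · exact absurd h' hnx
          · exact h'
        have hJyn : Jy = {n} := by
          apply Finset.Subset.antisymm
          · rw [← hU]; exact Finset.subset_union_right
          · simp only [Finset.singleton_subset_iff]; exact hnJy
        have hunY : σ u {n} ∈ Y := by rw [← hJyn]; exact hy
        -- the x0-support must be all of Icc 1 n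
        have hIx0n : Ix0 = Finset.Icc 1 n := by
          have hnd : ¬ Disjoint Ix0 ({n} : Finset ℕ) :=
            Finset.not_disjoint_iff.mpr ⟨n, c1, Finset.mem_singleton_self n⟩
          rcases pairCases h hJ hXY hIx0 hsn hx0 hunY with ⟨hd', _, _⟩ | ⟨_, _, _, _, e5, _, _⟩
          · exact absurd hd' hnd
          · apply Finset.Subset.antisymm
            · rw [← e5]; exact Finset.subset_union_left
            · intro i hi
              have : i ∈ Ix0 ∪ {n} := e5.symm ▸ hi
              rcases Finset.mem_union.mp this with h' | h'
              · exact h'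
              · rw [Finset.mem_singleton] at h'; subst h'; exact c1
        have hx0' : σ u (Finset.Icc 1 n) ∈ X := hIx0n ▸ hx0
        -- probe σ {n, n+1}
        have hpr : ({n, n + 1} : Finset ℕ) ⊆ Finset.Icc 1 (n + 1) := by
          intro i hi
          simp only [Finset.mem_insert, Finset.mem_singleton] at hi
          simp only [Finset.mem_Icc]; omega
        have hmem2 : σ u {n, n + 1} ∈ cube u (Finset.Icc 1 (n + 1)) := sigma_mem_cube hpr
        rw [hXY, Finset.mem_add] at hmem2
        obtain ⟨x', hx', y', hy', hxy'⟩ := hmem2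
        obtain ⟨Kx, hKx, rfl⟩ := mem_cube.mp (subset_of_add_left hXY h0Y hx')
        obtain ⟨Ky, hKy, rfl⟩ := mem_cube.mp (subset_of_add_right hXY h0X hy')
        rcases pairCases h hJ hXY hKx hKy hx' hy' with ⟨hd', hs', _⟩ | ⟨_, d2', _, d4', _, _, d7'⟩
        · have hU' : Kx ∪ Ky = {n, n + 1} :=
            sigma_inj h (Finset.union_subset hKx hKy) hpr (by rw [← hs', hxy'])
          have hKxP : Kx ⊆ P := hXsub Kx hKx hx'
          have hn1Kx : (n + 1) ∉ Kx := fun hc =>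
            (hPQ.forall_ne_finset (hKxP hc) hQn1) rfl
          by_cases hnKy : n ∈ Ky
          · -- Ky = {n, n+1} : collides with x0' yet contains n+1
            have : ¬ Disjoint (Finset.Icc 1 n) Ky :=
              Finset.not_disjoint_iff.mpr ⟨n, Finset.mem_Icc.mpr ⟨by omega, le_rfl⟩, hnKy⟩
            rcases pairCases h hJ hXY hIccn hKy hx0' hy' with ⟨hd'', _, _⟩ | ⟨_, _, _, e4, _, _, _⟩
            · exact absurd hd'' this
            · -- n+1 ∉ Ky, but n+1 ∈ Kx ∪ Ky = {n, n+1} and n+1 ∉ Kx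
              have : (n + 1) ∈ Kx ∪ Ky := hU'.symm ▸ (by simp : (n+1) ∈ ({n, n+1} : Finset ℕ))
              rcases Finset.mem_union.mp this with h' | h'
              · exact hn1Kx h'
              · exact e4 h'
          · have hnKx : n ∈ Kx := by
              have : n ∈ Kx ∪ Ky := hU'.symm ▸ (by simp : n ∈ ({n, n+1} : Finset ℕ))
              rcases Finset.mem_union.mp this with h' | h'
              · exact h'
              · exact absurd h' hnKy
            have hKxn : Kx = {n} := by
              apply Finset.Subset.antisymm
              · intro i hi
                have : i ∈ ({n, n + 1} : Finset ℕ) := hU' ▸ Finset.mem_union_left _ hi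
                simp only [Finset.mem_insert, Finset.mem_singleton] at this
                rcases this with rfl | rfl
                · exact Finset.mem_singleton_self _
                · exact absurd hi hn1Kx
              · simp only [Finset.singleton_subset_iff]; exact hnKx
            have hunX' : σ u {n} ∈ X := hKxn ▸ hx'
            have : ¬ Disjoint ({n} : Finset ℕ) ({n} : Finset ℕ) :=
              Finset.not_disjoint_iff.mpr ⟨n, Finset.mem_singleton_self n, Finset.mem_singleton_self n⟩
            rcases pairCases h hJ hXY hsn hsn hunX' hunY with ⟨hd'', _, _⟩ | ⟨_, _, _, _, e5', _, _⟩
            · exact absurd hd'' this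
            · have : (1 : ℕ) ∈ ({n} : Finset ℕ) := by
                rw [show ({n} : Finset ℕ) ∪ {n} = {n} by simp] at e5'
                rw [e5']; exact Finset.mem_Icc.mpr ⟨le_rfl, by omega⟩
              rw [Finset.mem_singleton] at this
              omega
        · -- collision in the {n, n+1} probe: impossible since σ K-form omits n
          have : ({n, n + 1} : Finset ℕ) = insert (n + 1) ((Kx ∩ Ky).erase n) := by
            apply sigma_inj h hpr
            · intro i hi
              rcases Finset.mem_insert.mp hi with rfl | hi'
              · exact Finset.mem_Icc.mpr ⟨by omega, le_rfl⟩
              · exact hKx (Finset.mem_of_mem_inter_left (Finset.mem_of_mem_erase hi'))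
            · rw [← d7', hxy']
          have : n ∈ insert (n + 1) ((Kx ∩ Ky).erase n) := by
            rw [← this]; simp
          rcases Finset.mem_insert.mp this with h' | h'
          · omega
          · exact (Finset.notMem_erase _ _) h'
    · -- collision in the {n} probe : both summands ≥ u n
      exfalso
      have b1 : u n ≤ σ u Jx := Finset.single_le_sum (fun i _ => Nat.zero_le _) d1
      have b2 : u n ≤ σ u Jy := Finset.single_le_sum (fun i _ => Nat.zero_le _) d2
      rw [sigma_singleton] at hxy
      omega
  -- (e8) any Y-support containing n is Icc 1 n
  have hyn : ∀ Iy, Iy ⊆ Finset.Icc 1 (n + 1) → σ u Iy ∈ Y → n ∈ Iy → Iy = Finset.Icc 1 n := by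
    intro Iy hIy hy hnIy
    have hnd : ¬ Disjoint ({n} : Finset ℕ) Iy :=
      Finset.not_disjoint_iff.mpr ⟨n, Finset.mem_singleton_self n, hnIy⟩
    rcases pairCases h hJ hXY hsn hIy hunX hy with ⟨hd', _, _⟩ | ⟨_, _, _, _, e5, _, _⟩
    · exact absurd hd' hnd
    · apply Finset.Subset.antisymm
      · rw [← e5]; exact Finset.subset_union_right
      · intro i hi
        have : i ∈ {n} ∪ Iy := e5.symm ▸ hi
        rcases Finset.mem_union.mp this with h' | h'
        · rw [Finset.mem_singleton] at h'; subst h'; exact hnIy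
        · exact h'
  -- (e9) σ (Icc 1 n) ∈ Y
  have hsnY : σ u (Finset.Icc 1 n) ∈ Y := by
    have := hyn Iy0 hIy0 hy0 c2
    rw [← this]; exact hy0
  -- (e10) every nonzero element of X has n in its support
  have hxn : ∀ Ix, Ix ⊆ Finset.Icc 1 (n + 1) → σ u Ix ∈ X → Ix.Nonempty → n ∈ Ix := by
    rintro Ix hIx hx ⟨j, hj⟩
    have hIxP : Ix ⊆ P := hXsub Ix hIx hx
    rcases pairCases h hJ hXY hIx hIccn hx hsnY with ⟨hd', _, _⟩ | ⟨d1, _, _, _, _, _, _⟩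
    · exfalso
      have hjP : j ∈ P := hIxP hj
      have hjn1 : j ≠ n + 1 := fun he => (hPQ.forall_ne_finset hjP hQn1) (by omega)
      have hjI : j ∈ Finset.Icc 1 n := by
        have := Finset.mem_Icc.mp (hIx hj)
        exact Finset.mem_Icc.mpr ⟨this.1, by omega⟩
      exact (hd'.forall_ne_finset hj hjI) rfl
    · exact d1
  -- (e11) P = {n}
  have hPn : P = {n} := by
    apply Finset.Subset.antisymm
    · intro j hjP
      rw [Finset.mem_singleton]
      by_contra hjn
      have hjIcc := Finset.mem_Icc.mp (hP hjP)
      have hjn1 : j ≠ n + 1 := fun he => (hPQ.forall_ne_finset hjP hQn1) (by omega)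
      have hjsub : ({j} : Finset ℕ) ⊆ Finset.Icc 1 (n + 1) := by
        simp only [Finset.singleton_subset_iff, Finset.mem_Icc]; omega
      have hjsub' : ({j} : Finset ℕ) ⊆ Finset.Icc 1 (n - 1) := by
        simp only [Finset.singleton_subset_iff, Finset.mem_Icc]; omega
      have hujlt : u j < u n := by
        have b1 : u j ≤ σ u (Finset.Icc 1 (n - 1)) :=
          Finset.single_le_sum (fun i _ => Nat.zero_le _) (hjsub' (Finset.mem_singleton_self j))
        have b2 := two_s_lt h (m := n) (by omega) le_rfl
        omega
      have hmem : σ u {j} ∈ cube u (Finset.Icc 1 (n + 1)) := sigma_mem_cube hjsub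
      rw [hXY, Finset.mem_add] at hmem
      obtain ⟨x, hx, y, hy, hxy⟩ := hmem
      obtain ⟨Jx, hJx, rfl⟩ := mem_cube.mp (subset_of_add_left hXY h0Y hx)
      obtain ⟨Jy, hJy, rfl⟩ := mem_cube.mp (subset_of_add_right hXY h0X hy)
      rcases pairCases h hJ hXY hJx hJy hx hy with ⟨hd', hs', _⟩ | ⟨d1, d2, _, _, _, _, _⟩
      · have hU : Jx ∪ Jy = {j} :=
          sigma_inj h (Finset.union_subset hJx hJy) hjsub (by rw [← hs', hxy])
        rcases Finset.eq_empty_or_nonempty Jx with rfl | hne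
        · -- u j ∈ Y
          have hJyj : Jy = {j} := by rw [← hU]; simp
          have hujY : σ u {j} ∈ Y := hJyj ▸ hy
          have : ¬ Disjoint P ({j} : Finset ℕ) :=
            Finset.not_disjoint_iff.mpr ⟨j, hjP, Finset.mem_singleton_self j⟩
          rcases pairCases h hJ hXY hP hjsub hPX hujY with ⟨hd'', _, _⟩ | ⟨_, d2', _, _, _, _, _⟩
          · exact absurd hd'' this
          · rw [Finset.mem_singleton] at d2'; omega
        · -- u j ∈ X : contradicts e10
          have hJxj : Jx = {j} := by
            rcases Finset.subset_singleton_iff.mp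
              (show Jx ⊆ {j} by rw [← hU]; exact Finset.subset_union_left) with h' | h'
            · exact absurd h' (Finset.nonempty_iff_ne_empty.mp hne)
            · exact h'
          have := hxn Jx hJx hx (by rw [hJxj]; exact ⟨j, Finset.mem_singleton_self j⟩)
          rw [hJxj, Finset.mem_singleton] at this
          omega
      · -- collision : both parts ≥ u n, but the total is u j < u n
        have b1 : u n ≤ σ u Jx := Finset.single_le_sum (fun i _ => Nat.zero_le _) d1
        have b2 : u n ≤ σ u Jy := Finset.single_le_sum (fun i _ => Nat.zero_le _) d2
        rw [sigma_singleton] at hxy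
        omega
    · simp only [Finset.singleton_subset_iff]; exact hnP
  -- (e12) X = {0, u n}
  have hXeq : X = {0, u n} := by
    apply Finset.Subset.antisymm
    · intro x hx
      obtain ⟨Ix, hIx, rfl⟩ := mem_cube.mp (subset_of_add_left hXY h0Y hx)
      have hIxP : Ix ⊆ P := hXsub Ix hIx hx
      rw [hPn] at hIxP
      rcases Finset.subset_singleton_iff.mp hIxP with rfl | rfl
      · simp [σ]
      · rw [sigma_singleton]; simp
    · intro x hx
      simp only [Finset.mem_insert, Finset.mem_singleton] at hx
      rcases hx with rfl | rfl
      · exact h0X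
      · rw [← sigma_singleton (u := u) (i := n)]; exact hunX
  -- (e13) every element of Y is in cube Q or is σ (Icc 1 n)
  have hYsub : ∀ y ∈ Y, y ∈ cube u Q ∪ {σ u (Finset.Icc 1 n)} := by
    intro y hy
    obtain ⟨Iy, hIy, rfl⟩ := mem_cube.mp (subset_of_add_right hXY h0X hy)
    by_cases hnIy : n ∈ Iy
    · rw [hyn Iy hIy hy hnIy]
      simp
    · apply Finset.mem_union_left
      refine mem_cube.mpr ⟨Iy, ?_, rfl⟩
      intro i hi
      have : i ∈ P ∪ Q := by rw [hPQJ]; exact hIy hi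
      rcases Finset.mem_union.mp this with h' | h'
      · rw [hPn, Finset.mem_singleton] at h'; subst h'; exact absurd hi hnIy
      · exact h'
  -- (e14) cube Q ⊆ Y
  have hQY' : cube u Q ⊆ Y := by
    intro v hv
    obtain ⟨I, hIQ, rfl⟩ := mem_cube.mp hv
    have hIcc : I ⊆ Finset.Icc 1 (n + 1) := hIQ.trans hQ
    have hnI : n ∉ I := fun hc => hnQ (hIQ hc)
    by_cases hI' : I = Finset.Icc 1 (n - 1)
    · subst hI'
      have hmem : σ u (Finset.Icc 1 (n - 1)) ∈ cube u (Finset.Icc 1 (n + 1)) :=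
        sigma_mem_cube (by intro i hi; simp only [Finset.mem_Icc] at *; omega)
      rw [hXY, Finset.mem_add] at hmem
      obtain ⟨x, hx, y, hy, hxy⟩ := hmem
      rw [hXeq] at hx
      simp only [Finset.mem_insert, Finset.mem_singleton] at hx
      rcases hx with rfl | rfl
      · rw [show y = σ u (Finset.Icc 1 (n - 1)) by omega] at hy; exact hy
      · exfalso
        have b2 := two_s_lt h (m := n) (by omega) le_rfl
        omega
    · have hins : insert n I ⊆ Finset.Icc 1 (n + 1) := by
        intro i hi
        rcases Finset.mem_insert.mp hi with rfl | hi'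
        · exact Finset.mem_Icc.mpr ⟨by omega, by omega⟩
        · exact hIcc hi'
      have hmem : σ u (insert n I) ∈ cube u (Finset.Icc 1 (n + 1)) := sigma_mem_cube hins
      have hsplit : σ u (insert n I) = u n + σ u I := Finset.sum_insert hnI
      rw [hXY, Finset.mem_add] at hmem
      obtain ⟨x, hx, y, hy, hxy⟩ := hmem
      rw [hXeq] at hx
      simp only [Finset.mem_insert, Finset.mem_singleton] at hx
      rcases hx with rfl | rfl
      · exfalso
        have hyin := hYsub y hy
        rcases Finset.mem_union.mp hyin with h' | h'
        · obtain ⟨I', hI'Q, hI'y⟩ := mem_cube.mp h'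
          have : insert n I = I' := by
            apply sigma_inj h hins (hI'Q.trans hQ)
            omega
          have hnI' : n ∈ I' := this ▸ Finset.mem_insert_self n I
          exact hnQ (hI'Q hnI')
        · rw [Finset.mem_singleton] at h'
          have heq2 : σ u (insert n I) = σ u (Finset.Icc 1 n) := by omega
          have := sigma_inj h hins hIccn heq2
          have hIeq : I = Finset.Icc 1 (n - 1) := by
            rw [← Finset.erase_insert hnI, this, Icc_erase_top (by omega)]
          exact hI' hIeq
      · rw [show y = σ u I by omega] at hy
        exact hy
  -- (e15/e16) conclude
  have hQeq : Q = insert (n + 1) (Finset.Icc 1 (n - 1)) := by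
    ext i
    simp only [Finset.mem_insert, Finset.mem_Icc]
    constructor
    · intro hi
      have hiIcc := Finset.mem_Icc.mp (hQ hi)
      have : i ≠ n := fun he => hnQ (he ▸ hi)
      omega
    · intro hi
      have hiIcc : i ∈ Finset.Icc 1 (n + 1) := Finset.mem_Icc.mpr (by omega)
      have : i ∈ P ∪ Q := by rw [hPQJ]; exact hiIcc
      rcases Finset.mem_union.mp this with h' | h'
      · rw [hPn, Finset.mem_singleton] at h'
        omega
      · exact h'
  refine ⟨hXeq, ?_⟩
  rw [Bset_eq, ← hQeq]
  apply Finset.Subset.antisymm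
  · intro y hy; exact hYsub y hy
  · apply Finset.union_subset hQY'
    simp only [Finset.singleton_subset_iff]
    exact hsnY

theorem main (h : H n u) {J X Y : Finset ℕ} (hJ : J ⊆ Finset.Icc 1 (n + 1))
    (hXY : cube u J = X + Y) (h0X : 0 ∈ X) (h0Y : 0 ∈ Y) (hX : X ≠ {0}) (hY : Y ≠ {0}) :
    (∃ J1 J2, Disjoint J1 J2 ∧ J1 ∪ J2 = J ∧ J1.Nonempty ∧ J2.Nonempty ∧
      X = cube u J1 ∧ Y = cube u J2) ∨
    (J = Finset.Icc 1 (n + 1) ∧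
      ((X = {0, u n} ∧ Y = Bset n u) ∨ (X = Bset n u ∧ Y = {0, u n}))) := by
  by_cases hnc : ∀ Ix Iy, Ix ⊆ Finset.Icc 1 (n + 1) → Iy ⊆ Finset.Icc 1 (n + 1) →
      σ u Ix ∈ X → σ u Iy ∈ Y → Disjoint Ix Iy
  · exact Or.inl (main_disjoint h hJ hXY h0X h0Y hX hY hnc)
  · right
    push_neg at hnc
    obtain ⟨Ix0, Iy0, hIx0, hIy0, hx0, hy0, hnd0⟩ := hnc
    rcases pairCases h hJ hXY hIx0 hIy0 hx0 hy0 with ⟨hd, _, _⟩ | ⟨c1, c2, c3, c4, c5, c6, c7⟩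
    · exact absurd hd hnd0
    have hJeq : J = Finset.Icc 1 (n + 1) := by
      apply Finset.Subset.antisymm hJ
      intro i hi
      have hiI := Finset.mem_Icc.mp hi
      rcases Nat.eq_or_lt_of_le hiI.2 with rfl | hlt
      · exact c6 (Finset.mem_insert_self _ _)
      · -- i ∈ Icc 1 n = Ix0 ∪ Iy0 ⊆ J : need Ix0 ∪ Iy0 ⊆ J
        have : i ∈ Ix0 ∪ Iy0 := by rw [c5]; exact Finset.mem_Icc.mpr ⟨hiI.1, by omega⟩
        -- supports lie in J
        have hsupX : Ix0 ⊆ J := by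
          obtain ⟨I', hI'J, hI'⟩ := mem_cube.mp (subset_of_add_left hXY h0Y hx0)
          rwa [sigma_inj h hIx0 (hI'J.trans hJ) hI'.symm]
        have hsupY : Iy0 ⊆ J := by
          obtain ⟨I', hI'J, hI'⟩ := mem_cube.mp (subset_of_add_right hXY h0X hy0)
          rwa [sigma_inj h hIy0 (hI'J.trans hJ) hI'.symm]
        rcases Finset.mem_union.mp this with h' | h'
        · exact hsupX h'
        · exact hsupY h'
    subst hJeq
    refine ⟨rfl, ?_⟩
    obtain ⟨P, Q, hPJ, hQJ, hPX, hQY, hmaxX, hmaxY, hsum⟩ := max_decomp h hJ hXY h0X h0Y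
    rcases pairCases h hJ hXY (hPJ.trans hJ) (hQJ.trans hJ) hPX hQY with
      ⟨hPQ, hs, _⟩ | ⟨_, _, _, _, _, _, d7⟩
    · have hPQJ : P ∪ Q = Finset.Icc 1 (n + 1) := by
        apply sigma_inj h (Finset.union_subset (hPJ.trans hJ) (hQJ.trans hJ)) hJ
        omega
      have hn1 : (n + 1) ∈ P ∪ Q := by
        rw [hPQJ]; exact Finset.mem_Icc.mpr ⟨by omega, le_rfl⟩
      rcases Finset.mem_union.mp hn1 with hn1P | hn1Q
      · -- swapped orientation
        have := main_exotic h (by rw [hXY, add_comm]) h0Y h0X (hQJ.trans hJ) (hPJ.trans hJ)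
          hPQ.symm (by rw [Finset.union_comm]; exact hPQJ) hQY hPX
          ⟨Iy0, Ix0, hIy0, hIx0, hy0, hx0, fun hd => hnd0 hd.symm⟩ hn1P
        exact Or.inr ⟨this.2, this.1⟩
      · exact Or.inl (main_exotic h hXY h0X h0Y (hPJ.trans hJ) (hQJ.trans hJ) hPQ
          (by exact hPQJ) hPX hQY ⟨Ix0, Iy0, hIx0, hIy0, hx0, hy0, hnd0⟩ hn1Q)
    · -- maxes collide : impossible
      exfalso
      have hnn := h.hn
      have hKsub : insert (n + 1) ((P ∩ Q).erase n) ⊆ Finset.Icc 1 (n + 1) := by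
        intro i hi
        rcases Finset.mem_insert.mp hi with rfl | hi'
        · exact Finset.mem_Icc.mpr ⟨by omega, le_rfl⟩
        · exact (hPJ.trans hJ) (Finset.mem_of_mem_inter_left (Finset.mem_of_mem_erase hi'))
      have : Finset.Icc 1 (n + 1) = insert (n + 1) ((P ∩ Q).erase n) :=
        sigma_inj h hJ hKsub (by have e1 := hsum; have e2 := d7; omega)
      have hnmem : n ∈ insert (n + 1) ((P ∩ Q).erase n) := by
        rw [← this]; exact Finset.mem_Icc.mpr ⟨by omega, by omega⟩
      rcases Finset.mem_insert.mp hnmem with h' | h'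
      · omega
      · exact (Finset.notMem_erase _ _) h'

lemma subset_pair {X : Finset ℕ} {m : ℕ} (h0 : 0 ∈ X) (hsub : X ⊆ {0, m}) :
    X = {0} ∨ X = {0, m} := by
  by_cases hm : m ∈ X
  · right
    apply Finset.Subset.antisymm hsub
    intro i hi
    simp only [Finset.mem_insert, Finset.mem_singleton] at hi
    rcases hi with rfl | rfl <;> assumption
  · left
    apply Finset.Subset.antisymm
    · intro i hi
      have := hsub hi
      simp only [Finset.mem_insert, Finset.mem_singleton] at this ⊢
      rcases this with rfl | rfl
      · rfl
      · exact absurd hi hm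
    · simp only [Finset.singleton_subset_iff]; exact h0

lemma pairAtom {m : ℕ} (hm : m ≠ 0) : IsAtom0 ({0, m} : Finset ℕ) := by
  refine ⟨by simp, ?_, ?_⟩
  · intro hc
    have : m ∈ ({0} : Finset ℕ) := hc ▸ (by simp : m ∈ ({0, m} : Finset ℕ))
    simp only [Finset.mem_singleton] at this
    exact hm this
  · intro X Y h0X h0Y heq
    have hXsub : X ⊆ {0, m} := subset_of_add_left heq h0Y
    have hYsub : Y ⊆ {0, m} := subset_of_add_right heq h0X
    rcases subset_pair h0X hXsub with hX | hX
    · exact Or.inl hX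
    rcases subset_pair h0Y hYsub with hY | hY
    · exact Or.inr hY
    exfalso
    have : m + m ∈ X + Y := Finset.add_mem_add (hX ▸ (by simp : m ∈ ({0, m} : Finset ℕ)))
      (hY ▸ (by simp : m ∈ ({0, m} : Finset ℕ)))
    rw [← heq] at this
    simp only [Finset.mem_insert, Finset.mem_singleton] at this
    omega

lemma mem_Bset {b : ℕ} : b ∈ Bset n u ↔
    b ∈ Aset n u ∨ (∃ a ∈ Aset n u, b = a + u (n + 1)) ∨ b = σ u (Finset.Icc 1 n) := by
  simp only [Bset, Finset.mem_union, Finset.mem_image, Finset.mem_singleton, or_assoc, σ]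
  constructor
  · rintro (h' | ⟨a, ha, rfl⟩ | h')
    · exact Or.inl h'
    · exact Or.inr (Or.inl ⟨a, ha, rfl⟩)
    · exact Or.inr (Or.inr h')
  · rintro (h' | ⟨a, ha, rfl⟩ | h')
    · exact Or.inl h'
    · exact Or.inr (Or.inl ⟨a, ha, rfl⟩)
    · exact Or.inr (Or.inr h')

lemma Icc_n_insert (hn : 1 ≤ n) : Finset.Icc 1 n = insert n (Finset.Icc 1 (n - 1)) := by
  ext i
  simp only [Finset.mem_insert, Finset.mem_Icc]
  omega

lemma S_split (h : H n u) : σ u (Finset.Icc 1 n) = u n + σ u (Finset.Icc 1 (n - 1)) := by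
  have hnn := h.hn
  rw [σ, Icc_n_insert (by omega), Finset.sum_insert (by simp only [Finset.mem_Icc]; omega)]
  rfl

lemma Batom (h : H n u) : IsAtom0 (Bset n u) := by
  classical
  have hnn := h.hn
  set S1 := σ u (Finset.Icc 1 (n - 1)) with hS1def
  set S := σ u (Finset.Icc 1 n) with hSdef
  have hS : S = u n + S1 := S_split h
  have h2S1 : 2 * S1 < u n := two_s_lt h (by omega) le_rfl
  have hun1 : u (n + 1) = S + u n := (h.ha).symm
  have hS1pos : 0 < S1 := by
    have h1 : u 1 ≤ S1 := Finset.single_le_sum (fun i _ => Nat.zero_le _)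
      (Finset.mem_Icc.mpr ⟨le_rfl, by omega⟩)
    have := h.hpos 1 le_rfl (by omega)
    omega
  have hAle : ∀ a ∈ Aset n u, a ≤ S1 := by
    intro a ha
    rw [Aset_eq] at ha
    exact le_of_mem_cube ha
  have h0A : 0 ∈ Aset n u := by rw [Aset_eq]; exact zero_mem_cube
  have hS1A : S1 ∈ Aset n u := by rw [Aset_eq]; exact sigma_mem_cube (Finset.Subset.refl _)
  have h0B : 0 ∈ Bset n u := mem_Bset.mpr (Or.inl h0A)
  have hSB : S ∈ Bset n u := mem_Bset.mpr (Or.inr (Or.inr rfl))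
  have htri : ∀ b ∈ Bset n u, b ≤ S1 ∨ b = S ∨ (u (n + 1) ≤ b ∧ b ≤ S1 + u (n + 1)) := by
    intro b hb
    rcases mem_Bset.mp hb with h' | ⟨a, ha, rfl⟩ | h'
    · exact Or.inl (hAle b h')
    · exact Or.inr (Or.inr ⟨by omega, by have := hAle a ha; omega⟩)
    · exact Or.inr (Or.inl h')
  have hBmax : ∀ b ∈ Bset n u, b ≤ S1 + u (n + 1) := by
    intro b hb
    rcases htri b hb with h' | h' | h' <;> omega
  have hmaxB : S1 + u (n + 1) ∈ Bset n u := mem_Bset.mpr (Or.inr (Or.inl ⟨S1, hS1A, rfl⟩))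
  refine ⟨h0B, ?_, ?_⟩
  · intro hc
    have : S ∈ ({0} : Finset ℕ) := hc ▸ hSB
    simp only [Finset.mem_singleton] at this
    omega
  · intro X Y h0X h0Y hBXY
    by_contra hcon
    push_neg at hcon
    obtain ⟨hX, hY⟩ := hcon
    have hXB : X ⊆ Bset n u := subset_of_add_left hBXY h0Y
    have hYB : Y ⊆ Bset n u := subset_of_add_right hBXY h0X
    -- a nonzero element exists in any set ≠ {0} containing 0
    have hnonzero : ∀ Z : Finset ℕ, 0 ∈ Z → Z ≠ {0} → ∃ z ∈ Z, 0 < z := by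
      intro Z h0Z hZ
      by_contra hc
      push_neg at hc
      apply hZ
      apply Finset.Subset.antisymm
      · intro z hz
        simp only [Finset.mem_singleton]
        exact Nat.le_antisymm (hc z hz) (Nat.zero_le z)
      · simp only [Finset.singleton_subset_iff]; exact h0Z
    -- the half lemma
    have Bhalf : ∀ X' Y' : Finset ℕ, 0 ∈ X' → 0 ∈ Y' → X' ≠ {0} → Bset n u = X' + Y' →
        (∀ x ∈ X', x ≤ S1) → False := by
      intro X' Y' h0X' h0Y' hX' hBXY' hbound
      obtain ⟨x1, hx1, hx1pos⟩ := hnonzero X' h0X' hX'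
      have hSmem : S ∈ X' + Y' := hBXY' ▸ hSB
      rw [Finset.mem_add] at hSmem
      obtain ⟨x, hx, y, hy, hxy⟩ := hSmem
      have hxS1 := hbound x hx
      have hyB : y ∈ Bset n u := subset_of_add_right hBXY' h0X' hy
      have hySn : y = S := by
        rcases htri y hyB with h' | h' | h' <;> omega
      have hx0 : x = 0 := by omega
      have hx1S : x1 + S ∈ Bset n u := by
        rw [hBXY']
        exact Finset.add_mem_add hx1 (hySn ▸ hy)
      have := hbound x1 hx1
      rcases htri _ hx1S with h' | h' | h' <;> omega
    -- max elements
    have hXne : X.Nonempty := ⟨0, h0X⟩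
    have hYne : Y.Nonempty := ⟨0, h0Y⟩
    set xm := X.max' hXne with hxmdef
    set ym := Y.max' hYne with hymdef
    have hxmB : xm ∈ Bset n u := hXB (X.max'_mem hXne)
    have hymB : ym ∈ Bset n u := hYB (Y.max'_mem hYne)
    have hsum : xm + ym = S1 + u (n + 1) := by
      have h1 : xm + ym ≤ S1 + u (n + 1) := by
        have : xm + ym ∈ Bset n u := by
          rw [hBXY]
          exact Finset.add_mem_add (X.max'_mem hXne) (Y.max'_mem hYne)
        exact hBmax _ this
      have h2 : S1 + u (n + 1) ≤ xm + ym := by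
        have : S1 + u (n + 1) ∈ X + Y := hBXY ▸ hmaxB
        rw [Finset.mem_add] at this
        obtain ⟨x, hx, y, hy, hxy⟩ := this
        have := X.le_max' x hx
        have := Y.le_max' y hy
        omega
      omega
    rcases htri ym hymB with hy' | hy' | hy'
    · rcases htri xm hxmB with hx' | hx' | hx'
      · omega
      · -- xm = S, ym ≤ S1 : impossible since xm + ym = S1 + u(n+1) = 2S
        omega
      · -- xm ≥ u (n+1) : Y is trivial
        exact Bhalf Y X h0Y h0X hY (by rw [hBXY, add_comm])
          (fun y hy => by have := Y.le_max' y hy; omega)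
    · rcases htri xm hxmB with hx' | hx' | hx'
      · omega
      · -- xm = ym = S : analyze u (n+1)
        have hmem : u (n + 1) ∈ X + Y := by
          rw [← hBXY]
          exact mem_Bset.mpr (Or.inr (Or.inl ⟨0, h0A, by omega⟩))
        rw [Finset.mem_add] at hmem
        obtain ⟨x, hx, y, hy, hxy⟩ := hmem
        have hxS : x ≤ S := by have := X.le_max' x hx; omega
        have hyS : y ≤ S := by have := Y.le_max' y hy; omega
        have hxB := hXB hx
        have hyB := hYB hy
        rcases htri x hxB with h1' | h1' | h1' <;> rcases htri y hyB with h2' | h2' | h2' <;> omega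
      · exact Bhalf Y X h0Y h0X hY (by rw [hBXY, add_comm])
          (fun y hy => by have := Y.le_max' y hy; omega)
    · exact Bhalf X Y h0X h0Y hX hBXY (fun x hx => by have := X.le_max' x hx; omega)

lemma zero_finset : (0 : Finset ℕ) = {0} := rfl

lemma cube_single {i : ℕ} : cube u {i} = ({0, u i} : Finset ℕ) := by
  rw [cube, Finset.sum_singleton]

lemma exists_pos {Z : Finset ℕ} (h0Z : 0 ∈ Z) (hZ : Z ≠ {0}) : ∃ z ∈ Z, 0 < z := by
  by_contra hc
  push_neg at hc
  apply hZ
  apply Finset.Subset.antisymm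
  · intro z hz
    simp only [Finset.mem_singleton]
    exact Nat.le_antisymm (hc z hz) (Nat.zero_le z)
  · simp only [Finset.singleton_subset_iff]; exact h0Z

lemma zero_mem_listSum {l : List (Finset ℕ)} (h : ∀ X ∈ l, 0 ∈ X) : 0 ∈ l.sum := by
  induction l with
  | nil => simp [zero_finset]
  | cons X l' ih =>
    rw [List.sum_cons]
    have : (0 : ℕ) + 0 ∈ X + l'.sum :=
      Finset.add_mem_add (h X (List.mem_cons_self)) (ih (fun Y hY => h Y (List.mem_cons_of_mem _ hY)))
    simpa using this

lemma sum_atoms_ne_zero {l : List (Finset ℕ)} (hne : l ≠ []) (h : ∀ X ∈ l, IsAtom0 X) :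
    l.sum ≠ {0} := by
  match l, hne with
  | X :: l', _ =>
    intro hc
    rw [List.sum_cons] at hc
    have hX := h X (List.mem_cons_self)
    obtain ⟨z, hz, hzpos⟩ := exists_pos hX.1 hX.2.1
    have h0s : 0 ∈ l'.sum := zero_mem_listSum (fun Y hY => (h Y (List.mem_cons_of_mem _ hY)).1)
    have : z + 0 ∈ X + l'.sum := Finset.add_mem_add hz h0s
    rw [hc] at this
    simp only [Nat.add_zero, Finset.mem_singleton] at this
    omega

lemma sum_atoms_eq_atom {l : List (Finset ℕ)} {T : Finset ℕ} (hl : ∀ X ∈ l, IsAtom0 X)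
    (hT : IsAtom0 T) (hsum : l.sum = T) : l = [T] := by
  match l with
  | [] =>
    exfalso
    rw [List.sum_nil, zero_finset] at hsum
    exact hT.2.1 hsum.symm
  | X :: l' =>
    rw [List.sum_cons] at hsum
    have hX := hl X (List.mem_cons_self)
    have h0s : 0 ∈ l'.sum := zero_mem_listSum (fun Y hY => (hl Y (List.mem_cons_of_mem _ hY)).1)
    rcases hT.2.2 X l'.sum hX.1 h0s hsum.symm with hc | hc
    · exact absurd hc hX.2.1
    · have hl'nil : l' = [] := by
        by_contra hne
        exact sum_atoms_ne_zero hne (fun Y hY => hl Y (List.mem_cons_of_mem _ hY)) hc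
      subst hl'nil
      rw [List.sum_nil, add_zero] at hsum
      rw [hsum]

lemma cube_atom (h : H n u) {J : Finset ℕ} (hJ : J ⊆ Finset.Icc 1 (n + 1))
    (ha : IsAtom0 (cube u J)) : ∃ i ∈ J, J = {i} := by
  rcases Finset.eq_empty_or_nonempty J with rfl | ⟨a, haJ⟩
  · exact absurd cube_empty ha.2.1
  have hsplit : cube u J = ({0, u a} : Finset ℕ) + cube u (J.erase a) := by
    conv_lhs => rw [← Finset.insert_erase haJ]
    exact cube_insert (Finset.notMem_erase _ _)
  rcases ha.2.2 _ _ (by simp) zero_mem_cube hsplit with hc | hc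
  · exfalso
    have hua : u a ∈ ({0} : Finset ℕ) := hc ▸ (by simp : u a ∈ ({0, u a} : Finset ℕ))
    simp only [Finset.mem_singleton] at hua
    have hi := Finset.mem_Icc.mp (hJ haJ)
    have := h.hpos a hi.1 hi.2
    omega
  · have hE : J.erase a = ∅ := by
      rcases Finset.eq_empty_or_nonempty (J.erase a) with he | ⟨b, hb⟩
      · exact he
      · exfalso
        have hub : u b ∈ cube u (J.erase a) := by
          rw [← sigma_singleton (u := u)]
          exact sigma_mem_cube (by simp only [Finset.singleton_subset_iff]; exact hb)
        rw [hc] at hub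
        simp only [Finset.mem_singleton] at hub
        have hbJ := Finset.mem_of_mem_erase hb
        have hi := Finset.mem_Icc.mp (hJ hbJ)
        have := h.hpos b hi.1 hi.2
        omega
    refine ⟨a, haJ, ?_⟩
    apply Finset.Subset.antisymm
    · intro i hi
      simp only [Finset.mem_singleton]
      by_contra hne
      have : i ∈ J.erase a := Finset.mem_erase.mpr ⟨hne, hi⟩
      rw [hE] at this
      exact absurd this (Finset.notMem_empty i)
    · simp only [Finset.singleton_subset_iff]; exact haJ

lemma cubeFact (h : H n u) : ∀ l : List (Finset ℕ), ∀ J : Finset ℕ,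
    (∀ X ∈ l, IsAtom0 X) → J ⊆ Finset.Icc 1 (n + 1) → J ≠ Finset.Icc 1 (n + 1) →
    l.sum = cube u J →
    (↑l : Multiset (Finset ℕ)) = J.val.map (fun i => ({0, u i} : Finset ℕ)) := by
  intro l
  induction l with
  | nil =>
    intro J _ hJ _ hsum
    rw [List.sum_nil] at hsum
    have hJE : J = ∅ := by
      rcases Finset.eq_empty_or_nonempty J with he | ⟨b, hb⟩
      · exact he
      · exfalso
        have hub : u b ∈ cube u J := by
          rw [← sigma_singleton (u := u)]
          exact sigma_mem_cube (by simp only [Finset.singleton_subset_iff]; exact hb)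
        rw [← hsum, zero_finset] at hub
        simp only [Finset.mem_singleton] at hub
        have hi := Finset.mem_Icc.mp (hJ hb)
        have := h.hpos b hi.1 hi.2
        omega
    subst hJE
    simp
  | cons X l' ih =>
    intro J hl hJ hJne hsum
    rw [List.sum_cons] at hsum
    have hX := hl X (List.mem_cons_self)
    have hl' : ∀ Y ∈ l', IsAtom0 Y := fun Y hY => hl Y (List.mem_cons_of_mem _ hY)
    have h0s : 0 ∈ l'.sum := zero_mem_listSum (fun Y hY => (hl' Y hY).1)
    by_cases hz : l'.sum = {0}
    · have hl'nil : l' = [] := by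
        by_contra hne
        exact sum_atoms_ne_zero hne hl' hz
      subst hl'nil
      rw [List.sum_nil, add_zero] at hsum
      obtain ⟨i, hiJ, rfl⟩ := cube_atom h hJ (hsum ▸ hX)
      rw [hsum, cube_single]
      simp
    · rcases main h hJ hsum.symm hX.1 h0s hX.2.1 hz with
        ⟨J1, J2, hd12, hu12, hne1, hne2, hXc, hYc⟩ | ⟨hJeq, _⟩
      · obtain ⟨i, hiJ1, rfl⟩ := cube_atom h
          (fun x hx => hJ (by rw [← hu12]; exact Finset.mem_union_left _ hx)) (hXc ▸ hX)
        have hJ2sub : J2 ⊆ Finset.Icc 1 (n + 1) :=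
          fun x hx => hJ (by rw [← hu12]; exact Finset.mem_union_right _ hx)
        have hJ2ne : J2 ≠ Finset.Icc 1 (n + 1) := by
          intro hc
          apply hJne
          apply Finset.Subset.antisymm hJ
          rw [← hu12, ← hc]
          exact Finset.subset_union_right
        have hih := ih J2 hl' hJ2sub hJ2ne hYc
        have hiJ2 : i ∉ J2 := fun hc => (hd12.forall_ne_finset (Finset.mem_singleton_self i) hc) rfl
        have hJins : J = insert i J2 := by
          rw [← hu12]
          ext x
          simp [Finset.mem_union, Finset.mem_insert]
        rw [hJins]
        have hval : (insert i J2).val = i ::ₘ J2.val := by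
          rw [Finset.insert_val, Multiset.ndinsert_of_notMem hiJ2]
        rw [hval, Multiset.map_cons, ← hih]
        rw [hXc, cube_single]
        rfl
      · exact absurd hJeq hJne

lemma range_map_eq (u : ℕ → ℕ) : ∀ m : ℕ,
    (↑((List.range m).map (fun i => ({0, u (i + 1)} : Finset ℕ))) : Multiset (Finset ℕ)) =
    (Finset.Icc 1 m).val.map (fun i => ({0, u i} : Finset ℕ)) := by
  intro m
  induction m with
  | zero => simp
  | succ m ih =>
    rw [List.range_succ, List.map_append, ← Multiset.coe_add, ih]
    have hIcc : Finset.Icc 1 (m + 1) = insert (m + 1) (Finset.Icc 1 m) := by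
      ext i; simp only [Finset.mem_insert, Finset.mem_Icc]; omega
    have hnm : (m + 1) ∉ Finset.Icc 1 m := by simp only [Finset.mem_Icc]; omega
    rw [hIcc, Finset.insert_val, Multiset.ndinsert_of_notMem hnm,
      Multiset.map_cons, add_comm]
    rw [show ((List.map (fun i => ({0, u (i + 1)} : Finset ℕ)) [m] : List (Finset ℕ)) : Multiset (Finset ℕ)) = {({0, u (m + 1)} : Finset ℕ)} by rfl]
    rw [Multiset.singleton_add]

lemma Uset_add (h : H n u) : Uset n u = ({0, u n} : Finset ℕ) + Bset n u := by
  have hnn := h.hn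
  rw [Uset_eq, Bset_eq, Finset.add_union]
  have hnmem : n ∉ insert (n + 1) (Finset.Icc 1 (n - 1)) := by
    simp only [Finset.mem_insert, Finset.mem_Icc]; omega
  have h1 : ({0, u n} : Finset ℕ) + cube u (insert (n + 1) (Finset.Icc 1 (n - 1))) =
      cube u (insert n (insert (n + 1) (Finset.Icc 1 (n - 1)))) := (cube_insert hnmem).symm
  have h2 : insert n (insert (n + 1) (Finset.Icc 1 (n - 1))) = Finset.Icc 1 (n + 1) := by
    ext i; simp only [Finset.mem_insert, Finset.mem_Icc]; omega
  rw [h1, h2]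
  have h3 : ({0, u n} : Finset ℕ) + {σ u (Finset.Icc 1 n)} =
      {σ u (Finset.Icc 1 n), σ u (Finset.Icc 1 n) + u n} := by
    rw [pair_add, Finset.image_singleton, ← Finset.insert_eq]
  rw [h3]
  symm
  apply Finset.union_eq_left.mpr
  intro x hx
  simp only [Finset.mem_insert, Finset.mem_singleton] at hx
  rcases hx with rfl | rfl
  · exact sigma_mem_cube (by intro i hi; simp only [Finset.mem_Icc] at *; omega)
  · have : σ u (Finset.Icc 1 n) + u n = σ u {n + 1} := by
      rw [sigma_singleton]; exact h.ha
    rw [this]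
    exact sigma_mem_cube (by simp only [Finset.singleton_subset_iff, Finset.mem_Icc]; omega)

lemma topFact (h : H n u) (l : List (Finset ℕ)) (hl : ∀ X ∈ l, IsAtom0 X)
    (hsum : l.sum = Uset n u) :
    l.Perm [({0, u n} : Finset ℕ), Bset n u] ∨
    l.Perm ((List.range (n + 1)).map fun i => ({0, u (i + 1)} : Finset ℕ)) := by
  have hnn := h.hn
  rw [Uset_eq] at hsum
  have hJ : Finset.Icc 1 (n + 1) ⊆ Finset.Icc 1 (n + 1) := Finset.Subset.refl _
  match l with
  | [] =>
    exfalso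
    rw [List.sum_nil] at hsum
    have hub : u 1 ∈ cube u (Finset.Icc 1 (n + 1)) := by
      rw [← sigma_singleton (u := u)]
      exact sigma_mem_cube (by simp only [Finset.singleton_subset_iff, Finset.mem_Icc]; omega)
    rw [← hsum, zero_finset] at hub
    simp only [Finset.mem_singleton] at hub
    have := h.hpos 1 le_rfl (by omega)
    omega
  | X :: l' =>
    rw [List.sum_cons] at hsum
    have hX := hl X (List.mem_cons_self)
    have hl' : ∀ Y ∈ l', IsAtom0 Y := fun Y hY => hl Y (List.mem_cons_of_mem _ hY)
    have h0s : 0 ∈ l'.sum := zero_mem_listSum (fun Y hY => (hl' Y hY).1)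
    by_cases hz : l'.sum = {0}
    · exfalso
      have hl'nil : l' = [] := by
        by_contra hne
        exact sum_atoms_ne_zero hne hl' hz
      subst hl'nil
      rw [List.sum_nil, add_zero] at hsum
      obtain ⟨i, hiJ, hJi⟩ := cube_atom h hJ (hsum ▸ hX)
      have h1 : (1 : ℕ) ∈ ({i} : Finset ℕ) := by
        rw [← hJi]; exact Finset.mem_Icc.mpr ⟨le_rfl, by omega⟩
      have h2 : (n + 1 : ℕ) ∈ ({i} : Finset ℕ) := by
        rw [← hJi]; exact Finset.mem_Icc.mpr ⟨by omega, le_rfl⟩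
      simp only [Finset.mem_singleton] at h1 h2
      omega
    · rcases main h hJ hsum.symm hX.1 h0s hX.2.1 hz with
        ⟨J1, J2, hd12, hu12, hne1, hne2, hXc, hYc⟩ | ⟨_, hcase⟩
      · right
        obtain ⟨i, hiJ1, rfl⟩ := cube_atom h
          (fun x hx => hJ (by rw [← hu12]; exact Finset.mem_union_left _ hx)) (hXc ▸ hX)
        have hJ2sub : J2 ⊆ Finset.Icc 1 (n + 1) :=
          fun x hx => hJ (by rw [← hu12]; exact Finset.mem_union_right _ hx)
        have hJ2ne : J2 ≠ Finset.Icc 1 (n + 1) := by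
          intro hc
          have hiJ2 : i ∉ J2 := fun hm => (hd12.forall_ne_finset (Finset.mem_singleton_self i) hm) rfl
          apply hiJ2
          rw [hc, ← hu12]
          exact Finset.mem_union_left _ (Finset.mem_singleton_self i)
        have hih := cubeFact h l' J2 hl' hJ2sub hJ2ne hYc
        have hiJ2 : i ∉ J2 := fun hc => (hd12.forall_ne_finset (Finset.mem_singleton_self i) hc) rfl
        have hJins : Finset.Icc 1 (n + 1) = insert i J2 := by
          rw [← hu12]
          ext x
          simp [Finset.mem_union, Finset.mem_insert]
        apply Multiset.coe_eq_coe.mp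
        rw [range_map_eq u (n + 1), hJins]
        have hval : (insert i J2).val = i ::ₘ J2.val := by
          rw [Finset.insert_val, Multiset.ndinsert_of_notMem hiJ2]
        rw [hval, Multiset.map_cons, ← hih, hXc, cube_single]
        rfl
      · rcases hcase with ⟨hX1, hY1⟩ | ⟨hX1, hY1⟩
        · left
          have : l' = [Bset n u] := sum_atoms_eq_atom hl' (Batom h) hY1
          rw [this, hX1]
        · left
          have hun : u n ≠ 0 := by
            have := h.hpos n (by omega) (by omega); omega
          have : l' = [({0, u n} : Finset ℕ)] := sum_atoms_eq_atom hl' (pairAtom hun) hY1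
          rw [this, hX1]
          exact List.Perm.swap _ _ _

end Aux

/-- Let `n ≥ 2` and let `u₁, …, u_{n+1}` be positive integers with
`u₁ + ⋯ + u_n = u_{n+1} - u_n` and `u₁ + ⋯ + u_i < u_{i+1}/2` for `1 ≤ i ≤ n-1`.
Then `B` is an atom of `P_fin,0(ℕ)` with `|B| ≥ 3`, `U = {0, u_n} + B`, the only
factorizations of `U` into atoms are (up to order) `{0, u_n}, B` and
`{0, u₁}, …, {0, u_{n+1}}`, and the set of lengths of `U` is `{2, n+1}`. -/
theorem stmt_17 (n : ℕ) (hn : 2 ≤ n) (u : ℕ → ℕ)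
    (hpos : ∀ i, 1 ≤ i → i ≤ n + 1 → 0 < u i)
    (ha : (∑ i ∈ Finset.Icc 1 n, u i) + u n = u (n + 1))
    (hb : ∀ i, 1 ≤ i → i ≤ n - 1 → 2 * (∑ j ∈ Finset.Icc 1 i, u j) < u (i + 1)) :
    IsAtom0 (Bset n u) ∧ 3 ≤ (Bset n u).card ∧
    Uset n u = ({0, u n} : Finset ℕ) + Bset n u ∧
    (∀ l : List (Finset ℕ), (∀ X ∈ l, IsAtom0 X) → l.sum = Uset n u →
      l.Perm [({0, u n} : Finset ℕ), Bset n u] ∨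
      l.Perm ((List.range (n + 1)).map fun i => ({0, u (i + 1)} : Finset ℕ))) ∧
    (∀ k : ℕ, 1 ≤ k →
      ((∃ l : List (Finset ℕ), l.length = k ∧ (∀ X ∈ l, IsAtom0 X) ∧
        l.sum = Uset n u) ↔ k = 2 ∨ k = n + 1)) := by
  have h : Aux.H n u := ⟨hn, hpos, ha, hb⟩
  refine ⟨Aux.Batom h, ?_, Aux.Uset_add h, fun l hl hs => Aux.topFact h l hl hs, ?_⟩
  · -- card ≥ 3
    have h0A : 0 ∈ Aset n u := by rw [Aux.Aset_eq]; exact Aux.zero_mem_cube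
    have h0B : 0 ∈ Bset n u := Aux.mem_Bset.mpr (Or.inl h0A)
    have hSB : Aux.σ u (Finset.Icc 1 n) ∈ Bset n u := Aux.mem_Bset.mpr (Or.inr (Or.inr rfl))
    have huB : u (n + 1) ∈ Bset n u :=
      Aux.mem_Bset.mpr (Or.inr (Or.inl ⟨0, h0A, (zero_add _).symm⟩))
    have hSpos : 0 < Aux.σ u (Finset.Icc 1 n) := by
      have h1 : u n ≤ Aux.σ u (Finset.Icc 1 n) :=
        Finset.single_le_sum (fun i _ => Nat.zero_le _) (Finset.mem_Icc.mpr ⟨by omega, le_rfl⟩)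
      have := hpos n (by omega) (by omega)
      omega
    have hSu := Aux.u_big h
    have hsub : ({0, Aux.σ u (Finset.Icc 1 n), u (n + 1)} : Finset ℕ) ⊆ Bset n u := by
      intro x hx
      simp only [Finset.mem_insert, Finset.mem_singleton] at hx
      rcases hx with rfl | rfl | rfl <;> assumption
    have hcard : ({0, Aux.σ u (Finset.Icc 1 n), u (n + 1)} : Finset ℕ).card = 3 :=
      Finset.card_eq_three.mpr ⟨_, _, _, by omega, by omega, by omega, rfl⟩
    calc (3 : ℕ) = ({0, Aux.σ u (Finset.Icc 1 n), u (n + 1)} : Finset ℕ).card := hcard.symm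
      _ ≤ (Bset n u).card := Finset.card_le_card hsub
  · -- set of lengths
    intro k hk
    constructor
    · rintro ⟨l, hlen, hat, hsum⟩
      rcases Aux.topFact h l hat hsum with hp | hp
      · left; rw [← hlen, hp.length_eq]; rfl
      · right; rw [← hlen, hp.length_eq]; simp
    · rintro (rfl | rfl)
      · refine ⟨[({0, u n} : Finset ℕ), Bset n u], rfl, ?_, ?_⟩
        · intro X hX
          simp only [List.mem_cons, List.not_mem_nil, or_false, List.mem_singleton] at hX
          rcases hX with rfl | rfl
          · exact Aux.pairAtom (by have := hpos n (by omega) (by omega); omega)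
          · exact Aux.Batom h
        · rw [List.sum_cons, List.sum_cons, List.sum_nil, add_zero, ← Aux.Uset_add h]
      · refine ⟨(List.range (n + 1)).map (fun i => ({0, u (i + 1)} : Finset ℕ)), by simp, ?_, ?_⟩
        · intro X hX
          obtain ⟨i, hi, rfl⟩ := List.mem_map.mp hX
          have : i < n + 1 := List.mem_range.mp hi
          exact Aux.pairAtom (by have := hpos (i + 1) (by omega) (by omega); omega)
        · rw [Aux.Uset_eq]
          calc ((List.range (n + 1)).map (fun i => ({0, u (i + 1)} : Finset ℕ))).sum
              = (↑((List.range (n + 1)).map (fun i => ({0, u (i + 1)} : Finset ℕ))) :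
                Multiset (Finset ℕ)).sum := (Multiset.sum_coe _).symm
            _ = ((Finset.Icc 1 (n + 1)).val.map (fun i => ({0, u i} : Finset ℕ))).sum := by
                rw [Aux.range_map_eq u (n + 1)]
            _ = Aux.cube u (Finset.Icc 1 (n + 1)) :=
                (Finset.sum_eq_multiset_sum _ _).symm
end

section
/- For every integer k ≥ 2, the union U_k(P_fin,0(ℕ)) of all sets of lengths of P_fin,0(ℕ) containing k equals the set of all integers ≥ 2; that is, for all integers k, m ≥ 2 there exists X ∈ P_fin,0(ℕ) with both k ∈ L(X) and m ∈ L(X), and conversely every integer m lying in some set of lengths that contains k satisfies m ≥ 2. -/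
/-!
Two-element sets containing `0` are atoms by Cauchy–Davenport, and for `d ≥ 4` so is `B_d`,
which satisfies `{0, 1} + B_d = [0, d]`. Hence `[0, n] = (k - 2) • {0, 1} + [0, n - k + 2]` is a
sum of `k` atoms whenever `2 ≤ k ≤ n - 2`, so `[0, n]` with `n` large has both `k` and `m` in its
set of lengths. Conversely `0 ∈ L(X)` forces `X = {0}` and `1 ∈ L(X)` forces `X` to be an atom,
and neither is a sum of `k ≥ 2` atoms.
-/

open Pointwise

/-- The set of lengths of `X` in `P_fin,0(ℕ)`: the set of `k` such that `X` is a sum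
of `k` atoms of `P_fin,0(ℕ)`. -/
def lengths0 (X : Finset ℕ) : Set ℕ :=
  {k | ∃ l : List (Finset ℕ), l.length = k ∧ (∀ A ∈ l, IsAtom0 A) ∧ l.sum = X}

namespace Finset

lemma exists_ne_zero_of_ne_singleton_zero {A : Finset ℕ} (h0 : 0 ∈ A) (hA : A ≠ {0}) :
    ∃ a ∈ A, a ≠ 0 :=
  ((nontrivial_iff_ne_singleton h0).2 hA).exists_ne 0

lemma zero_mem_list_sum {l : List (Finset ℕ)} (h : ∀ A ∈ l, 0 ∈ A) : 0 ∈ l.sum :=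
  l.sum_induction (0 ∈ ·) (fun _ _ => add_mem_add) zero_mem_zero h

lemma range_succ_add_range_succ (a b : ℕ) :
    range (a + 1) + range (b + 1) = range (a + b + 1) := by
  ext n
  simp only [mem_add, mem_range]
  constructor
  · rintro ⟨x, hx, y, hy, rfl⟩
    omega
  · exact fun hn => ⟨min n a, by omega, n - min n a, by omega, by omega⟩

end Finset

open Finset

lemma isAtom0_of_card_eq_two {A : Finset ℕ} (h0 : 0 ∈ A) (hA : #A = 2) : IsAtom0 A := by
  refine ⟨h0, fun h => by simp [h] at hA, fun X Y hX hY hXY => ?_⟩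
  have hcard := cauchy_davenport_add_of_linearOrder_isCancelAdd ⟨0, hX⟩ ⟨0, hY⟩
  rw [← hXY, hA] at hcard
  have of_card_le_one {Z : Finset ℕ} (hZ : 0 ∈ Z) (h : #Z ≤ 1) : Z = {0} :=
    eq_singleton_iff_unique_mem.2 ⟨hZ, fun z hz => card_le_one.1 h z hz 0 hZ⟩
  have hX1 : 0 < #X := card_pos.2 ⟨0, hX⟩
  have hY1 : 0 < #Y := card_pos.2 ⟨0, hY⟩
  obtain h | h : #X ≤ 1 ∨ #Y ≤ 1 := by omega
  · exact .inl (of_card_le_one hX h)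
  · exact .inr (of_card_le_one hY h)

lemma isAtom0_zero_one : IsAtom0 {0, 1} := isAtom0_of_card_eq_two (by simp) rfl

/-- The paper's `B_d = {0, 1} ∪ {x ∈ [2, d - 1] : x ≢ d (mod 2)}`. -/
def rangeCofactor (d : ℕ) : Finset ℕ :=
  (range d).filter fun x => x ≤ 1 ∨ x % 2 ≠ d % 2

lemma mem_rangeCofactor {d x : ℕ} :
    x ∈ rangeCofactor d ↔ x < d ∧ (x ≤ 1 ∨ x % 2 ≠ d % 2) := by
  simp [rangeCofactor]

lemma zero_one_add_rangeCofactor {d : ℕ} (hd : 2 ≤ d) :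
    {0, 1} + rangeCofactor d = range (d + 1) := by
  ext n
  simp only [mem_add, mem_insert, mem_singleton, mem_rangeCofactor, mem_range]
  constructor
  · rintro ⟨x, hx, y, hy, rfl⟩
    omega
  · intro hn
    by_cases h : n ≤ 1 ∨ n % 2 ≠ d % 2 ∧ n < d
    · exact ⟨0, .inl rfl, n, by omega, by omega⟩
    · exact ⟨1, .inr rfl, n - 1, by omega, by omega⟩

/- If `B_d = X + Y` nontrivially, write `d - 1 = a + b` with `a ∈ X`, `b ∈ Y`. Maximality of
`d - 1` forces `a, b ≠ 0`, parity rules out `a = 1` or `b = 1`, so `a, b` are even and `d` is odd;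
but then `1` lies in `X` or `Y` and `1 + b` or `a + 1` is an odd element of `B_d` above `1`. -/
lemma isAtom0_rangeCofactor {d : ℕ} (hd : 4 ≤ d) : IsAtom0 (rangeCofactor d) := by
  have one_mem : 1 ∈ rangeCofactor d := mem_rangeCofactor.2 ⟨by omega, .inl le_rfl⟩
  refine ⟨mem_rangeCofactor.2 ⟨by omega, .inl (Nat.zero_le 1)⟩,
    fun h => by simp [h] at one_mem, ?_⟩
  rintro X Y hX hY hXY
  by_contra! hne
  have mem : ∀ {u v}, u ∈ X → v ∈ Y → u + v < d ∧ (u + v ≤ 1 ∨ (u + v) % 2 ≠ d % 2) :=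
    fun hu hv => mem_rangeCofactor.1 (hXY ▸ add_mem_add hu hv)
  obtain ⟨x, hx, hx0⟩ := exists_ne_zero_of_ne_singleton_zero hX hne.1
  obtain ⟨y, hy, hy0⟩ := exists_ne_zero_of_ne_singleton_zero hY hne.2
  obtain ⟨a, ha, b, hb, hab⟩ :=
    mem_add.1 (hXY ▸ mem_rangeCofactor.2 ⟨by omega, .inr (by omega)⟩ : d - 1 ∈ X + Y)
  obtain ⟨u, hu, v, hv, huv⟩ := mem_add.1 (hXY ▸ one_mem)
  have ha0 : a ≠ 0 := by
    have := (mem hx hb).1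
    omega
  have hb0 : b ≠ 0 := by
    have := (mem ha hy).1
    omega
  have ha_mem := mem ha hY
  have hb_mem := mem hX hb
  have ha2 : 2 ≤ a := by omega
  have hb2 : 2 ≤ b := by omega
  obtain rfl | rfl : u = 1 ∨ v = 1 := by omega
  · have := mem hu hb
    omega
  · have := mem ha hv
    omega

lemma one_mem_lengths0 {A : Finset ℕ} (hA : IsAtom0 A) : 1 ∈ lengths0 A :=
  ⟨[A], rfl, by simpa using hA, by simp⟩

lemma add_mem_lengths0_add {X Y : Finset ℕ} {j k : ℕ} (hj : j ∈ lengths0 X)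
    (hk : k ∈ lengths0 Y) : j + k ∈ lengths0 (X + Y) := by
  obtain ⟨l, rfl, hl, rfl⟩ := hj
  obtain ⟨l', rfl, hl', rfl⟩ := hk
  exact ⟨l ++ l', List.length_append, fun A hA => (List.mem_append.1 hA).elim (hl A) (hl' A),
    List.sum_append⟩

lemma self_mem_lengths0_range (n : ℕ) : n ∈ lengths0 (range (n + 1)) := by
  induction n with
  | zero => exact ⟨[], rfl, by simp, by rw [List.sum_nil, zero_add, range_one]; rfl⟩
  | succ n ih =>
    have := add_mem_lengths0_add ih (one_mem_lengths0 isAtom0_zero_one)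
    rwa [show ({0, 1} : Finset ℕ) = range (0 + 1 + 1) by decide,
      range_succ_add_range_succ] at this

lemma two_mem_lengths0_range {d : ℕ} (hd : 4 ≤ d) : 2 ∈ lengths0 (range (d + 1)) := by
  rw [← zero_one_add_rangeCofactor (by omega)]
  exact add_mem_lengths0_add (one_mem_lengths0 isAtom0_zero_one)
    (one_mem_lengths0 (isAtom0_rangeCofactor hd))

lemma mem_lengths0_range {k n : ℕ} (hk : 2 ≤ k) (hkn : k + 2 ≤ n) :
    k ∈ lengths0 (range (n + 1)) := by
  have := add_mem_lengths0_add (self_mem_lengths0_range (k - 2))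
    (two_mem_lengths0_range (d := n - k + 2) (by omega))
  rwa [range_succ_add_range_succ, show k - 2 + (n - k + 2) = n by omega,
    show k - 2 + 2 = k by omega] at this

lemma list_sum_ne_singleton_zero {l : List (Finset ℕ)} (hl : l ≠ [])
    (h : ∀ A ∈ l, IsAtom0 A) : l.sum ≠ {0} := by
  obtain ⟨A, t, rfl⟩ := List.exists_cons_of_ne_nil hl
  obtain ⟨hA0, hA1, -⟩ := h A List.mem_cons_self
  obtain ⟨a, ha, ha0⟩ := exists_ne_zero_of_ne_singleton_zero hA0 hA1
  have h0t : 0 ∈ t.sum := zero_mem_list_sum fun B hB => (h B (List.mem_cons_of_mem _ hB)).1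
  intro hsum
  have : a ∈ (A :: t).sum := by
    rw [List.sum_cons]
    exact subset_add_left A h0t ha
  simp [hsum, ha0] at this

lemma eq_singleton_zero_of_zero_mem_lengths0 {X : Finset ℕ} (h : 0 ∈ lengths0 X) : X = {0} := by
  obtain ⟨l, hl, -, rfl⟩ := h
  rw [List.length_eq_zero_iff.1 hl]
  rfl

lemma ne_singleton_zero_of_mem_lengths0 {X : Finset ℕ} {k : ℕ} (hk : k ≠ 0)
    (h : k ∈ lengths0 X) : X ≠ {0} := by
  obtain ⟨l, rfl, hl, rfl⟩ := h
  exact list_sum_ne_singleton_zero (List.ne_nil_of_length_pos (Nat.pos_of_ne_zero hk)) hl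

lemma isAtom0_of_one_mem_lengths0 {X : Finset ℕ} (h : 1 ∈ lengths0 X) : IsAtom0 X := by
  obtain ⟨l, hl, hat, rfl⟩ := h
  obtain ⟨A, rfl⟩ := List.length_eq_one_iff.1 hl
  simpa using hat A List.mem_cons_self

lemma not_isAtom0_of_mem_lengths0 {X : Finset ℕ} {k : ℕ} (hk : 2 ≤ k)
    (h : k ∈ lengths0 X) : ¬ IsAtom0 X := by
  obtain ⟨_ | ⟨A, t⟩, hl, hat, rfl⟩ := h
  · rw [List.length_nil] at hl
    omega
  rw [List.length_cons] at hl
  have hA := hat A List.mem_cons_self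
  have hat_t : ∀ B ∈ t, IsAtom0 B := fun B hB => hat B (List.mem_cons_of_mem _ hB)
  rintro ⟨-, -, hirr⟩
  rcases hirr A t.sum hA.1 (zero_mem_list_sum fun B hB => (hat_t B hB).1) List.sum_cons
    with h | h
  · exact hA.2.1 h
  · exact list_sum_ne_singleton_zero (List.ne_nil_of_length_pos (by omega)) hat_t h

/-- For every `k ≥ 2`, the union `U_k(P_fin,0(ℕ))` of all sets of lengths containing
`k` equals `ℕ_{≥2}`: for all `k, m ≥ 2` there is `X ∈ P_fin,0(ℕ)` with
`k, m ∈ L(X)`, and conversely every `m` lying in a set of lengths containing some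
`k ≥ 2` satisfies `m ≥ 2`. -/
theorem stmt_19 :
    (∀ k m : ℕ, 2 ≤ k → 2 ≤ m →
      ∃ X : Finset ℕ, 0 ∈ X ∧ k ∈ lengths0 X ∧ m ∈ lengths0 X) ∧
    (∀ k m : ℕ, 2 ≤ k → ∀ X : Finset ℕ, 0 ∈ X →
      k ∈ lengths0 X → m ∈ lengths0 X → 2 ≤ m) := by
  refine ⟨fun k m hk hm => ⟨range (max k m + 2 + 1), by simp,
    mem_lengths0_range hk (by omega), mem_lengths0_range hm (by omega)⟩, ?_⟩
  intro k m hk X _ hkX hmX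
  by_contra! hm
  interval_cases m
  · exact ne_singleton_zero_of_mem_lengths0 (by omega) hkX
      (eq_singleton_zero_of_zero_mem_lengths0 hmX)
  · exact not_isAtom0_of_mem_lengths0 hk hkX (isAtom0_of_one_mem_lengths0 hmX)
end
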